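/- arXiv:2605.16235 — 6 statements merged into one kernel-verified Lean document; each statement's English description precedes it below -/
import Mathlib

section
/- Let ω > 0 be a real number and i ≥ 1 an integer. Then there exists a constant C = C(ω,i) > 0 such that: for every function f : ℝ → ℝ that is continuously differentiable on the open interval (-1,0), satisfies lim_{z→-1⁺} f(z)/(z+1)^{i-1/2} = 0, and for which both integrals ∫_{-1}^{0} (-z)^{2ω} f(z)²/(z+1)^{2i} dz and ∫_{-1}^{0} (-z)^{2ω+2} f'(z)²/(z+1)^{2(i-1)} dz are finite, one has ∫_{-1}^{0} (-z)^{2ω} f(z)²/(z+1)^{2i} dz ≤ C ∫_{-1}^{0} (-z)^{2ω+2} f'(z)²/(z+1)^{2(i-1)} dz. -/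
open MeasureTheory Set Filter Topology


private lemma hardy_pointwise_aux (c a₁ a₂ X Y s t P T : ℝ) (hc : 0 < c)
    (hc1 : c ≤ a₁) (hc2 : c ≤ a₂) (hs : 0 < s) (ht : 0 < t) (hst : s + t = 1)
    (hP : 0 < P) (hT : 0 < T) :
    c / 2 * (P * X ^ 2 / (T * t ^ 2))
      + (2 * X * Y * (s * t) - X ^ 2 * (a₁ * t + a₂ * s)) * P / (T * t ^ 2)
      ≤ 2 / c * (P * s ^ 2 * Y ^ 2 / T) := by
  have hM : c ≤ a₁ * t + a₂ * s := by
    have e1 : c * t ≤ a₁ * t := mul_le_mul_of_nonneg_right hc1 ht.le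
    have e2 : c * s ≤ a₂ * s := mul_le_mul_of_nonneg_right hc2 hs.le
    have e3 : c * s + c * t = c := by
      have : c * (s + t) = c := by rw [hst, mul_one]
      linarith [this, (by ring : c * (s + t) = c * s + c * t)]
    linarith
  have h5 := mul_le_mul_of_nonneg_right hM (sq_nonneg X)
  have h3 : 0 ≤ (c * X - 2 * (s * t) * Y) ^ 2 / (2 * c) := by positivity
  have h4 : (c * X - 2 * (s * t) * Y) ^ 2 / (2 * c)
      = c / 2 * X ^ 2 + 2 / c * ((s * t) ^ 2 * Y ^ 2) - 2 * X * Y * (s * t) := by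
    field_simp
    ring
  have key : c / 2 * X ^ 2
      + (2 * X * Y * (s * t) - X ^ 2 * (a₁ * t + a₂ * s))
      ≤ 2 / c * ((s * t) ^ 2 * Y ^ 2) := by
    nlinarith [h5, h3, h4]
  have hD : 0 < P / (T * t ^ 2) := by positivity
  have eL : c / 2 * (P * X ^ 2 / (T * t ^ 2))
      + (2 * X * Y * (s * t) - X ^ 2 * (a₁ * t + a₂ * s)) * P / (T * t ^ 2)
      = (c / 2 * X ^ 2 + (2 * X * Y * (s * t) - X ^ 2 * (a₁ * t + a₂ * s)))
        * (P / (T * t ^ 2)) := by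
    field_simp
  have eR : 2 / c * (P * s ^ 2 * Y ^ 2 / T)
      = 2 / c * ((s * t) ^ 2 * Y ^ 2) * (P / (T * t ^ 2)) := by
    field_simp
  rw [eL, eR]
  exact mul_le_mul_of_nonneg_right key hD.le

/-- Lemma 4.6 ("inductive Hardy"): for `ω > 0` and integer `i ≥ 1` there is a constant
`C = C(ω,i) > 0` such that for every `f` continuously differentiable on `(-1,0)` with
`f(z)/(z+1)^(i-1/2) → 0` as `z → -1⁺` and with both weighted integrals finite,
`∫ (-z)^(2ω) f²/(z+1)^(2i) ≤ C ∫ (-z)^(2ω+2) f'²/(z+1)^(2(i-1))`. -/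
theorem inductive_hardy (ω : ℝ) (hω : 0 < ω) (i : ℕ) (hi : 1 ≤ i) :
    ∃ C > 0, ∀ f f' : ℝ → ℝ,
      (∀ z ∈ Ioo (-1 : ℝ) 0, HasDerivAt f (f' z) z) →
      ContinuousOn f' (Ioo (-1) 0) →
      Tendsto (fun z => f z / (z + 1) ^ ((i : ℝ) - 1/2))
        (nhdsWithin (-1) (Ioi (-1))) (nhds 0) →
      IntegrableOn (fun z => (-z) ^ (2 * ω) * (f z) ^ 2 / (z + 1) ^ (2 * i)) (Ioo (-1) 0) →
      IntegrableOn (fun z => (-z) ^ (2 * ω + 2) * (f' z) ^ 2 / (z + 1) ^ (2 * (i - 1)))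
        (Ioo (-1) 0) →
      ∫ z in Ioo (-1 : ℝ) 0, (-z) ^ (2 * ω) * (f z) ^ 2 / (z + 1) ^ (2 * i)
        ≤ C * ∫ z in Ioo (-1 : ℝ) 0,
            (-z) ^ (2 * ω + 2) * (f' z) ^ 2 / (z + 1) ^ (2 * (i - 1)) := by
  obtain ⟨j, rfl⟩ : ∃ j, i = j + 1 := ⟨i - 1, (Nat.succ_pred_eq_of_pos hi).symm⟩
  set c : ℝ := min (2 * ω + 1) (2 * (j : ℝ) + 1) with hcdef
  have hc : 0 < c := lt_min (by linarith) (by positivity)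
  refine ⟨4 / c ^ 2, by positivity, ?_⟩
  intro f f' hf hf' hlim hA hB
  simp only [Nat.add_sub_cancel] at hB ⊢
  -- abbreviations
  set φ : ℝ → ℝ := fun z => (-z) ^ (2 * ω) * f z ^ 2 / (z + 1) ^ (2 * (j + 1)) with hφdef
  set ψ : ℝ → ℝ := fun z => (-z) ^ (2 * ω + 2) * f' z ^ 2 / (z + 1) ^ (2 * j) with hψdef
  set W : ℝ → ℝ := fun z => (-z) ^ (2 * ω + 1) / (z + 1) ^ (2 * j + 1) with hWdef
  set G : ℝ → ℝ := fun z => f z ^ 2 * W z with hGdef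
  set g : ℝ → ℝ := fun z =>
    (2 * f z * f' z * ((-z) * (z + 1))
      - f z ^ 2 * ((2 * ω + 1) * (z + 1) + (2 * (j : ℝ) + 1) * (-z)))
      * (-z) ^ (2 * ω) / (z + 1) ^ (2 * (j + 1)) with hgdef
  -- basic positivity on the interval
  have hmem : ∀ z ∈ Ioo (-1 : ℝ) 0, 0 < -z ∧ 0 < z + 1 := by
    rintro z ⟨h1, h2⟩; constructor <;> linarith
  -- continuity facts
  have hfc : ContinuousOn f (Ioo (-1 : ℝ) 0) := fun z hz =>
    (hf z hz).continuousAt.continuousWithinAt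
  have hrpow : ∀ p : ℝ, ContinuousOn (fun z : ℝ => (-z) ^ p) (Ioo (-1 : ℝ) 0) := by
    intro p z hz
    have hs := (hmem z hz).1
    exact ((Real.continuousAt_rpow_const (-z) p (Or.inl hs.ne')).comp
      (continuous_neg.continuousAt)).continuousWithinAt
  have hφc : ContinuousOn φ (Ioo (-1 : ℝ) 0) := by
    apply ((hrpow (2 * ω)).mul (hfc.pow 2)).div
      (Continuous.continuousOn ((continuous_id.add continuous_const).pow _))
    intro z hz
    exact pow_ne_zero _ (hmem z hz).2.ne'
  have hψc : ContinuousOn ψ (Ioo (-1 : ℝ) 0) := by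
    apply ((hrpow (2 * ω + 2)).mul (hf'.pow 2)).div
      (Continuous.continuousOn ((continuous_id.add continuous_const).pow _))
    intro z hz
    exact pow_ne_zero _ (hmem z hz).2.ne'
  have hgc : ContinuousOn g (Ioo (-1 : ℝ) 0) := by
    have hpoly1 : Continuous fun z : ℝ => (-z) * (z + 1) := by fun_prop
    have hpoly2 : Continuous fun z : ℝ => (2 * ω + 1) * (z + 1) + (2 * (j : ℝ) + 1) * (-z) := by
      fun_prop
    apply ContinuousOn.div
    · apply ContinuousOn.mul _ (hrpow (2 * ω))
      exact (((continuousOn_const.mul hfc).mul hf').mul hpoly1.continuousOn).sub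
        ((hfc.pow 2).mul hpoly2.continuousOn)
    · exact Continuous.continuousOn ((continuous_id.add continuous_const).pow _)
    · intro z hz
      exact pow_ne_zero _ (hmem z hz).2.ne'
  -- derivative of G
  have hG' : ∀ z ∈ Ioo (-1 : ℝ) 0, HasDerivAt G (g z) z := by
    intro z hz
    obtain ⟨hs, ht⟩ := hmem z hz
    have e1 : (-z) ^ (2 * ω + 1) = (-z) ^ (2 * ω) * (-z) := by
      rw [Real.rpow_add hs, Real.rpow_one]
    have h1 : HasDerivAt (fun z : ℝ => (-z) ^ (2 * ω + 1))
        (-((2 * ω + 1) * (-z) ^ (2 * ω))) z := by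
      have hbase := Real.hasDerivAt_rpow_const (x := -z) (p := 2 * ω + 1) (Or.inl hs.ne')
      have := hbase.comp z (hasDerivAt_neg z)
      refine this.congr_deriv ?_
      rw [show 2 * ω + 1 - 1 = 2 * ω by ring]
      ring
    have h2 : HasDerivAt (fun z : ℝ => (z + 1) ^ (2 * j + 1))
        ((2 * (j : ℝ) + 1) * (z + 1) ^ (2 * j)) z := by
      have := ((hasDerivAt_id z).add_const 1).pow (2 * j + 1)
      refine this.congr_deriv ?_
      simp only [id, Nat.add_sub_cancel, mul_one]
      push_cast
      ring
    have hW : HasDerivAt W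
        ((-((2 * ω + 1) * (-z) ^ (2 * ω)) * (z + 1) ^ (2 * j + 1)
          - (-z) ^ (2 * ω + 1) * ((2 * (j : ℝ) + 1) * (z + 1) ^ (2 * j)))
          / ((z + 1) ^ (2 * j + 1)) ^ 2) z := h1.div h2 (pow_ne_zero _ ht.ne')
    have hf2 : HasDerivAt (fun z => f z ^ 2) (2 * f z * f' z) z := by
      have := (hf z hz).pow 2
      refine this.congr_deriv ?_
      push_cast
      ring
    have := hf2.mul hW
    refine this.congr_deriv ?_
    simp only [hgdef, hWdef]
    rw [e1]
    have hX : ((z + 1) ^ (2 * j + 1)) ≠ 0 := pow_ne_zero _ ht.ne'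
    field_simp
    ring
  -- pointwise key inequality
  have hstar : ∀ z ∈ Ioo (-1 : ℝ) 0, c / 2 * φ z + g z ≤ 2 / c * ψ z := by
    intro z hz
    obtain ⟨hs, ht⟩ := hmem z hz
    have hc1 : c ≤ 2 * ω + 1 := min_le_left _ _
    have hc2 : c ≤ 2 * (j : ℝ) + 1 := min_le_right _ _
    have hst : -z + (z + 1) = 1 := by ring
    have hP : (0:ℝ) < (-z) ^ (2 * ω) := Real.rpow_pos_of_pos hs _
    have hT : (0:ℝ) < (z + 1) ^ (2 * j) := pow_pos ht _
    have e2 : (-z) ^ (2 * ω + 2) = (-z) ^ (2 * ω) * (-z) ^ 2 := by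
      rw [Real.rpow_add hs, show ((2:ℝ)) = ((2:ℕ):ℝ) by norm_num, Real.rpow_natCast]
    have epow : (z + 1) ^ (2 * (j + 1)) = (z + 1) ^ (2 * j) * (z + 1) ^ 2 := by
      rw [← pow_add]
      ring
    simp only [hφdef, hgdef, hψdef]
    rw [e2, epow]
    exact hardy_pointwise_aux c (2 * ω + 1) (2 * (j : ℝ) + 1) (f z) (f' z) (-z) (z + 1)
      ((-z) ^ (2 * ω)) ((z + 1) ^ (2 * j)) hc hc1 hc2 hs ht hst hP hT
  -- nonnegativity
  have hφ0 : ∀ z ∈ Ioo (-1 : ℝ) 0, 0 ≤ φ z := by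
    intro z hz
    obtain ⟨hs, ht⟩ := hmem z hz
    have := Real.rpow_nonneg hs.le (2 * ω)
    positivity
  have hψ0 : ∀ z ∈ Ioo (-1 : ℝ) 0, 0 ≤ ψ z := by
    intro z hz
    obtain ⟨hs, ht⟩ := hmem z hz
    have := Real.rpow_nonneg hs.le (2 * ω + 2)
    positivity
  have hG0 : ∀ z ∈ Ioo (-1 : ℝ) 0, 0 ≤ G z := by
    intro z hz
    obtain ⟨hs, ht⟩ := hmem z hz
    have := Real.rpow_nonneg hs.le (2 * ω + 1)
    simp only [hGdef, hWdef]
    positivity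
  -- the per-interval estimate
  have hkey : ∀ a b : ℝ, a ∈ Ioo (-1 : ℝ) 0 → b ∈ Ioo (-1 : ℝ) 0 → a ≤ b →
      c / 2 * (∫ z in Ioc a b, φ z) ≤ 2 / c * (∫ z in Ioc a b, ψ z) + G a := by
    intro a b ha hb hab
    have hsub : Icc a b ⊆ Ioo (-1 : ℝ) 0 := fun z hz =>
      ⟨lt_of_lt_of_le ha.1 hz.1, lt_of_le_of_lt hz.2 hb.2⟩
    have huicc : uIcc a b = Icc a b := uIcc_of_le hab
    have hφu : ContinuousOn φ (uIcc a b) := by rw [huicc]; exact hφc.mono hsub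
    have hψu : ContinuousOn ψ (uIcc a b) := by rw [huicc]; exact hψc.mono hsub
    have hgu : ContinuousOn g (uIcc a b) := by rw [huicc]; exact hgc.mono hsub
    have hφi : IntervalIntegrable φ volume a b := hφu.intervalIntegrable
    have hψi : IntervalIntegrable ψ volume a b := hψu.intervalIntegrable
    have hgi : IntervalIntegrable g volume a b := hgu.intervalIntegrable
    have hFTC : ∫ z in a..b, g z = G b - G a :=
      intervalIntegral.integral_eq_sub_of_hasDerivAt
        (fun z hz => hG' z (hsub (huicc ▸ hz))) hgi
    have hmono : (∫ z in a..b, (c / 2 * φ z + g z)) ≤ ∫ z in a..b, 2 / c * ψ z :=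
      intervalIntegral.integral_mono_on hab ((hφi.const_mul _).add hgi) (hψi.const_mul _)
        (fun z hz => hstar z (hsub hz))
    rw [intervalIntegral.integral_add (hφi.const_mul _) hgi, hFTC,
      intervalIntegral.integral_const_mul, intervalIntegral.integral_const_mul] at hmono
    have hGb : 0 ≤ G b := hG0 b hb
    have e1 : ∫ z in a..b, φ z = ∫ z in Ioc a b, φ z := intervalIntegral.integral_of_le hab
    have e2 : ∫ z in a..b, ψ z = ∫ z in Ioc a b, ψ z := intervalIntegral.integral_of_le hab
    rw [e1, e2] at hmono
    linarith
  -- bound the ψ-part by B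
  set B : ℝ := ∫ z in Ioo (-1 : ℝ) 0, ψ z with hBdef
  have hψbd : ∀ a b : ℝ, a ∈ Ioo (-1 : ℝ) 0 → b ∈ Ioo (-1 : ℝ) 0 →
      ∫ z in Ioc a b, ψ z ≤ B := by
    intro a b ha hb
    apply setIntegral_mono_set hB
    · exact (ae_restrict_iff' measurableSet_Ioo).2 (Eventually.of_forall hψ0)
    · apply HasSubset.Subset.eventuallyLE
      intro z hz
      exact ⟨lt_trans ha.1 hz.1, lt_of_le_of_lt hz.2 hb.2⟩
  -- the exhausting sequence
  set a : ℕ → ℝ := fun n => -1 + 1 / (n + 2) with hadef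
  set b : ℕ → ℝ := fun n => -(1 / (n + 2)) with hbdef
  have hseq : ∀ n : ℕ, a n ∈ Ioo (-1 : ℝ) 0 ∧ b n ∈ Ioo (-1 : ℝ) 0 ∧ a n ≤ b n := by
    intro n
    have h2 : (0 : ℝ) < (n : ℝ) + 2 := by positivity
    have h3 : 1 / ((n : ℝ) + 2) ≤ 1 / 2 := by
      rw [div_le_div_iff₀ h2 two_pos]; push_cast; linarith [Nat.cast_nonneg (α := ℝ) n]
    have h4 : 0 < 1 / ((n : ℝ) + 2) := by positivity
    refine ⟨⟨by simp [hadef]; positivity, ?_⟩, ⟨?_, ?_⟩, ?_⟩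
    · simp only [hadef]; linarith
    · simp only [hbdef]; linarith
    · simp only [hbdef]; linarith
    · simp only [hadef, hbdef]; linarith
  have hSm : Monotone fun n : ℕ => Ioc (a n) (b n) := by
    intro n m hnm
    have : 1 / ((m : ℝ) + 2) ≤ 1 / ((n : ℝ) + 2) := by
      apply one_div_le_one_div_of_le (by positivity)
      have : (n : ℝ) ≤ m := Nat.cast_le.2 hnm
      linarith
    apply Ioc_subset_Ioc <;> simp only [hadef, hbdef] <;> linarith
  have hSu : ⋃ n, Ioc (a n) (b n) = Ioo (-1 : ℝ) 0 := by
    apply Subset.antisymm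
    · apply iUnion_subset
      intro n z hz
      obtain ⟨ha', hb', _⟩ := hseq n
      exact ⟨lt_trans ha'.1 hz.1, lt_of_le_of_lt hz.2 hb'.2⟩
    · intro z hz
      obtain ⟨n, hn⟩ := exists_nat_one_div_lt (lt_min (by linarith [hz.1] : (0:ℝ) < z + 1)
        (by linarith [hz.2] : (0:ℝ) < -z))
      simp only [mem_iUnion]
      have hstep : 1 / ((n : ℝ) + 2) < 1 / ((n : ℝ) + 1) := by
        apply one_div_lt_one_div_of_lt (by positivity) (by linarith)
      refine ⟨n, ?_, ?_⟩
      · simp only [hadef]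
        have := lt_of_lt_of_le hn (min_le_left _ _)
        linarith
      · simp only [hbdef]
        have := lt_of_lt_of_le hn (min_le_right _ _)
        linarith
  set A : ℝ := ∫ z in Ioo (-1 : ℝ) 0, φ z with hAdef
  have htendA : Tendsto (fun n => ∫ z in Ioc (a n) (b n), φ z) atTop (𝓝 A) := by
    have := tendsto_setIntegral_of_monotone (fun n => measurableSet_Ioc) hSm
      (hSu ▸ hA : IntegrableOn φ (⋃ n, Ioc (a n) (b n)) volume)
    rwa [hSu] at this
  -- G (a n) → 0
  have hGlim : Tendsto (fun n => G (a n)) atTop (𝓝 0) := by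
    have h0 : Tendsto (fun n : ℕ => 1 / ((n : ℝ) + 2)) atTop (𝓝 0) := by
      have h1 : Tendsto (fun n : ℕ => (n : ℝ) + 2) atTop atTop :=
        tendsto_atTop_add_const_right _ 2 tendsto_natCast_atTop_atTop
      exact h1.inv_tendsto_atTop.congr (fun n => by simp [one_div])
    have h1 : Tendsto a atTop (𝓝 (-1)) := by
      have := tendsto_const_nhds (x := (-1 : ℝ)) (f := atTop (α := ℕ)) |>.add h0
      simpa [hadef] using this
    have hatend : Tendsto a atTop (𝓝[>] (-1)) := by
      apply tendsto_nhdsWithin_of_tendsto_nhds_of_eventually_within _ h1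
      exact Eventually.of_forall fun n => (hseq n).1.1
    have hcomp : Tendsto (fun n => f (a n) / (a n + 1) ^ ((↑(j + 1) : ℝ) - 1 / 2))
        atTop (𝓝 0) := hlim.comp hatend
    have hneg : Tendsto (fun n => (-a n) ^ (2 * ω + 1)) atTop (𝓝 1) := by
      have hcont : ContinuousAt (fun x : ℝ => x ^ (2 * ω + 1)) 1 :=
        Real.continuousAt_rpow_const 1 _ (Or.inl one_ne_zero)
      have h2 : Tendsto (fun n => -a n) atTop (𝓝 1) := by
        have := h1.neg
        simpa using this
      have := hcont.tendsto.comp h2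
      rw [Real.one_rpow] at this
      exact this
    have hmul : Tendsto
        (fun n => (f (a n) / (a n + 1) ^ ((↑(j + 1) : ℝ) - 1 / 2)) ^ 2 * (-a n) ^ (2 * ω + 1))
        atTop (𝓝 0) := by
      have := (hcomp.pow 2).mul hneg
      simpa using this
    apply hmul.congr
    intro n
    obtain ⟨⟨hn1, hn2⟩, _, _⟩ := hseq n
    have hx : (0:ℝ) < a n + 1 := by linarith
    have hpow : ((a n + 1) ^ ((↑(j + 1) : ℝ) - 1 / 2)) ^ 2 = (a n + 1) ^ (2 * j + 1) := by
      rw [← Real.rpow_natCast ((a n + 1) ^ ((↑(j + 1) : ℝ) - 1 / 2)) 2,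
        ← Real.rpow_mul hx.le]
      rw [show ((↑(j + 1) : ℝ) - 1 / 2) * (2:ℕ) = ((2 * j + 1 : ℕ) : ℝ) by push_cast; ring]
      rw [Real.rpow_natCast]
    simp only [hGdef, hWdef]
    rw [div_pow, hpow]
    have hne : (a n + 1) ^ (2 * j + 1) ≠ 0 := pow_ne_zero _ hx.ne'
    field_simp
  -- conclude
  have hchain : ∀ n : ℕ, c / 2 * (∫ z in Ioc (a n) (b n), φ z) ≤ 2 / c * B + G (a n) := by
    intro n
    obtain ⟨ha', hb', hab⟩ := hseq n
    have h1 := hkey (a n) (b n) ha' hb' hab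
    have h2 := hψbd (a n) (b n) ha' hb'
    have h3 : (0:ℝ) < 2 / c := by positivity
    have h4 := mul_le_mul_of_nonneg_left h2 h3.le
    linarith
  have hfinal : c / 2 * A ≤ 2 / c * B := by
    have hT1 : Tendsto (fun n => c / 2 * (∫ z in Ioc (a n) (b n), φ z)) atTop (𝓝 (c / 2 * A)) :=
      htendA.const_mul _
    have hT2 : Tendsto (fun n => 2 / c * B + G (a n)) atTop (𝓝 (2 / c * B + 0)) :=
      tendsto_const_nhds.add hGlim
    rw [add_zero] at hT2
    exact le_of_tendsto_of_tendsto' hT1 hT2 hchain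
  have : A ≤ 4 / c ^ 2 * B := by
    have h := mul_le_mul_of_nonneg_left hfinal (le_of_lt (by positivity : (0:ℝ) < 2 / c))
    have e1 : 2 / c * (c / 2 * A) = A := by field_simp
    have e2 : 2 / c * (2 / c * B) = 4 / c ^ 2 * B := by field_simp; ring
    rw [e1, e2] at h
    exact h
  exact this
end

section
/- For every integer i ≥ 1 there exists a constant C = C(i) > 0 such that: for every f : ℝ → ℝ continuously differentiable on (-1,-1/2], with lim_{z→-1⁺} f(z)/(z+1)^{i-1/2} = 0 and with ∫_{-1}^{-1/2} f(z)²/(z+1)^{2i} dz < ∞, one has ∫_{-1}^{-1/2} f(z)²/(z+1)^{2i} dz ≤ C ∫_{-1}^{-1/2} f'(z)²/(z+1)^{2(i-1)} dz. -/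
open MeasureTheory Set Filter Topology


lemma ptwise (i : ℕ) (hi : 1 ≤ i) (x y u : ℝ) (hu : 0 < u) :
    2 * x * y / u ^ (2 * i - 1) ≤
      (1/2) * (x ^ 2 / u ^ (2 * i)) + 2 * (y ^ 2 / u ^ (2 * (i - 1))) := by
  have h1 : 2 * i - 1 = i + (i - 1) := by omega
  have h2 : 2 * i = i + i := by omega
  have h3 : 2 * (i - 1) = (i - 1) + (i - 1) := by omega
  rw [h1, h2, h3, pow_add, pow_add, pow_add]
  have hp : (0:ℝ) < u ^ i := pow_pos hu i
  have hq : (0:ℝ) < u ^ (i - 1) := pow_pos hu (i - 1)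
  have key : 2 * (x / u ^ i) * (y / u ^ (i-1)) ≤
      (1/2) * (x / u ^ i) ^ 2 + 2 * (y / u ^ (i-1)) ^ 2 := by
    nlinarith [sq_nonneg (x / u ^ i / 2 - 2 * (y / u ^ (i-1)) / 2), sq_nonneg (x / u ^ i - 2 * (y / u ^ (i-1)))]
  calc 2 * x * y / (u ^ i * u ^ (i-1)) = 2 * (x / u ^ i) * (y / u ^ (i-1)) := by
        field_simp
    _ ≤ (1/2) * (x / u ^ i) ^ 2 + 2 * (y / u ^ (i-1)) ^ 2 := key
    _ = (1/2) * (x ^ 2 / (u ^ i * u ^ i)) + 2 * (y ^ 2 / (u ^ (i-1) * u ^ (i-1))) := by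
        field_simp

lemma percut (i : ℕ) (hi : 1 ≤ i) (f f' : ℝ → ℝ)
    (hf : ∀ z ∈ Ioc (-1 : ℝ) (-1/2), HasDerivWithinAt f (f' z) (Ioc (-1) (-1/2)) z)
    (hf' : ContinuousOn f' (Ioc (-1) (-1/2)))
    (hIG : IntegrableOn (fun z => f' z ^ 2 / (z + 1) ^ (2 * (i - 1))) (Ioc (-1 : ℝ) (-1/2)))
    (a : ℝ) (ha : a ∈ Ioo (-1 : ℝ) (-1/2)) :
    ∫ z in Ioc a (-1/2), f z ^ 2 / (z + 1) ^ (2 * i) ≤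
      2 * (f a ^ 2 / (a + 1) ^ (2 * i - 1)) +
        4 * ∫ z in Ioc (-1 : ℝ) (-1/2), f' z ^ 2 / (z + 1) ^ (2 * (i - 1)) := by
  set b : ℝ := -1/2 with hb
  set s : Set ℝ := Ioc (-1 : ℝ) b with hs
  obtain ⟨ha1, ha2⟩ := ha
  have hab : a ≤ b := ha2.le
  have hsub : Icc a b ⊆ s := fun z hz => ⟨lt_of_lt_of_le ha1 hz.1, hz.2⟩
  have hpos : ∀ z ∈ Icc a b, 0 < z + 1 := fun z hz => by linarith [hz.1, ha1]
  -- continuity of f on s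
  have hcf : ContinuousOn f s := fun z hz => (hf z hz).continuousWithinAt
  -- F, G, the integrands
  set F : ℝ → ℝ := fun z => f z ^ 2 / (z + 1) ^ (2 * i) with hF
  set G : ℝ → ℝ := fun z => f' z ^ 2 / (z + 1) ^ (2 * (i - 1)) with hG
  set P : ℝ → ℝ := fun z => 2 * f z * f' z / (z + 1) ^ (2 * i - 1) with hP
  have hcont_aux : ∀ n : ℕ, ContinuousOn (fun z : ℝ => (z + 1) ^ n) (Icc a b) :=
    fun n => (continuous_pow n).comp (continuous_id.add continuous_const) |>.continuousOn
  have hne : ∀ n : ℕ, ∀ z ∈ Icc a b, (z + 1) ^ n ≠ 0 :=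
    fun n z hz => pow_ne_zero n (hpos z hz).ne'
  have hcF : ContinuousOn F (Icc a b) :=
    (((hcf.mono hsub).pow 2).div (hcont_aux (2 * i)) (hne (2 * i)))
  have hcG : ContinuousOn G (Icc a b) :=
    (((hf'.mono hsub).pow 2).div (hcont_aux (2 * (i - 1))) (hne (2 * (i - 1))))
  have hcP : ContinuousOn P (Icc a b) := by
    exact ((continuousOn_const.mul (hcf.mono hsub)).mul (hf'.mono hsub)).div
      (hcont_aux (2 * i - 1)) (hne (2 * i - 1))
  -- the antiderivative
  set g : ℝ → ℝ := fun z => f z ^ 2 / (z + 1) ^ (2 * i - 1) with hg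
  have hcg : ContinuousOn g (Icc a b) :=
    ((hcf.mono hsub).pow 2).div (hcont_aux (2 * i - 1)) (hne (2 * i - 1))
  set c : ℝ := (2 * i : ℝ) - 1 with hc
  have hc1 : 1 ≤ c := by
    have : (1:ℝ) ≤ (i:ℝ) := by exact_mod_cast hi
    simp only [hc]; linarith
  -- derivative of g
  have hderiv : ∀ x ∈ Ioo a b, HasDerivWithinAt g (P x - c * F x) (Ioi x) x := by
    intro x hx
    have hxs : x ∈ s := hsub (Ioo_subset_Icc_self hx)
    have hxpos : 0 < x + 1 := hpos x (Ioo_subset_Icc_self hx)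
    have hmem : s ∈ nhdsWithin x (Ioi x) := by
      have : Ioc x b ∈ nhdsWithin x (Ioi x) := Ioc_mem_nhdsGT_of_mem ⟨le_refl x, hx.2⟩
      exact mem_of_superset this (fun z hz => ⟨lt_trans (lt_trans ha1 hx.1) hz.1, hz.2⟩)
    have hfx : HasDerivWithinAt f (f' x) (Ioi x) x := (hf x hxs).mono_of_mem_nhdsWithin hmem
    have hnum : HasDerivWithinAt (fun z => f z ^ 2) (2 * f x * f' x) (Ioi x) x := by
      have := hfx.fun_pow 2
      simpa [mul_comm, mul_assoc] using this
    have hden : HasDerivWithinAt (fun z => (z + 1) ^ (2 * i - 1))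
        ((2 * i - 1 : ℕ) * (x + 1) ^ (2 * i - 1 - 1)) (Ioi x) x := by
      have h1 : HasDerivWithinAt (fun z : ℝ => z + 1) 1 (Ioi x) x :=
        ((hasDerivAt_id x).add_const 1).hasDerivWithinAt
      simpa using h1.fun_pow (2 * i - 1)
    have := hnum.fun_div hden (pow_ne_zero _ hxpos.ne')
    refine this.congr_deriv ?_
    have h21 : 2 * i - 1 - 1 = 2 * (i - 1) := by omega
    have hsplit : 2 * i = (2 * i - 1) + 1 := by omega
    have hsplit2 : 2 * i - 1 = 2 * (i - 1) + 1 := by omega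
    have hcast : ((2 * i - 1 : ℕ) : ℝ) = c := by
      simp only [hc]; push_cast [Nat.cast_sub (by omega : 1 ≤ 2 * i)]; ring
    rw [h21, hcast]
    simp only [hP, hF]
    rw [hsplit, hsplit2]
    simp only [Nat.add_sub_cancel]
    field_simp
    ring
  -- FTC
  have hcPF : ContinuousOn (fun z => P z - c * F z) (Icc a b) :=
    hcP.sub (continuousOn_const.mul hcF)
  have hint : IntervalIntegrable (fun z => P z - c * F z) volume a b :=
    hcPF.intervalIntegrable_of_Icc hab
  have hftc : ∫ z in a..b, (P z - c * F z) = g b - g a :=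
    intervalIntegral.integral_eq_sub_of_hasDeriv_right_of_le hab hcg hderiv hint
  have hintP : IntervalIntegrable P volume a b := hcP.intervalIntegrable_of_Icc hab
  have hintF : IntervalIntegrable F volume a b := hcF.intervalIntegrable_of_Icc hab
  have hintG : IntervalIntegrable G volume a b := hcG.intervalIntegrable_of_Icc hab
  have hsplit_int : ∫ z in a..b, (P z - c * F z) =
      (∫ z in a..b, P z) - c * ∫ z in a..b, F z := by
    rw [intervalIntegral.integral_sub hintP (hintF.const_mul c),
      intervalIntegral.integral_const_mul]
  -- pointwise bound P ≤ (1/2) F + 2 G on Icc a b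
  have hPbound : ∀ z ∈ Icc a b, P z ≤ (1/2) * F z + 2 * G z := by
    intro z hz
    exact ptwise i hi (f z) (f' z) (z + 1) (hpos z hz)
  have hintP_le : ∫ z in a..b, P z ≤ (1/2) * (∫ z in a..b, F z) + 2 * ∫ z in a..b, G z := by
    have := intervalIntegral.integral_mono_on hab hintP
      (((hintF.const_mul (1/2))).add (hintG.const_mul 2)) hPbound
    calc ∫ z in a..b, P z ≤ ∫ z in a..b, ((1/2) * F z + 2 * G z) := this
      _ = (1/2) * (∫ z in a..b, F z) + 2 * ∫ z in a..b, G z := by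
          rw [intervalIntegral.integral_add (hintF.const_mul (1/2)) (hintG.const_mul 2),
            intervalIntegral.integral_const_mul, intervalIntegral.integral_const_mul]
  -- g b ≥ 0, φ ≥ 0
  have hgb : 0 ≤ g b := by
    apply div_nonneg (sq_nonneg _)
    exact pow_nonneg (by norm_num [hb]) _
  have hφ : ∫ z in Ioc a b, F z = ∫ z in a..b, F z := (intervalIntegral.integral_of_le hab).symm
  have hφ0 : 0 ≤ ∫ z in a..b, F z := by
    rw [← hφ]
    apply setIntegral_nonneg measurableSet_Ioc
    intro z hz
    exact div_nonneg (sq_nonneg _) (pow_nonneg (by linarith [hz.1, ha1] : (0:ℝ) ≤ z + 1) _)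
  -- ∫ G over Ioc a b ≤ ∫ G over s
  have hGmono : ∫ z in Ioc a b, G z ≤ ∫ z in s, G z := by
    apply setIntegral_mono_set hIG
    · filter_upwards with z using div_nonneg (sq_nonneg _)
        (by rw [pow_mul]; exact pow_nonneg (sq_nonneg _) _)
    · exact HasSubset.Subset.eventuallyLE (fun z hz => ⟨lt_of_lt_of_le ha1 hz.1.le, hz.2⟩)
  have hGa : ∫ z in a..b, G z = ∫ z in Ioc a b, G z := intervalIntegral.integral_of_le hab
  -- combine
  clear_value b s F G P g c
  have key : c * ∫ z in a..b, F z ≤ g a + (1/2) * (∫ z in a..b, F z) + 2 * ∫ z in s, G z := by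
    have h1 : c * ∫ z in a..b, F z = (∫ z in a..b, P z) - (g b - g a) := by
      rw [← hftc, hsplit_int]; ring
    rw [h1]
    have := hintP_le
    rw [hGa] at this
    linarith [hGmono]
  have hFle : ∫ z in a..b, F z ≤ c * ∫ z in a..b, F z :=
    le_mul_of_one_le_left hφ0 hc1
  rw [hφ]
  have : ∫ z in a..b, F z ≤ 2 * g a + 4 * ∫ z in s, G z := by linarith
  simpa [hg] using this

/-- Near-axis Hardy inequality (half of Lemma 4.6): for every integer `i ≥ 1` there is
`C = C(i) > 0` such that every `f` continuously differentiable on `(-1,-1/2]`, with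
`f(z)/(z+1)^(i-1/2) → 0` as `z → -1⁺` and `∫ f²/(z+1)^(2i) < ∞`, satisfies
`∫_{-1}^{-1/2} f²/(z+1)^(2i) ≤ C ∫_{-1}^{-1/2} f'²/(z+1)^(2(i-1))`. -/
theorem near_axis_hardy (i : ℕ) (hi : 1 ≤ i) :
    ∃ C > 0, ∀ f f' : ℝ → ℝ,
      (∀ z ∈ Ioc (-1 : ℝ) (-1/2), HasDerivWithinAt f (f' z) (Ioc (-1) (-1/2)) z) →
      ContinuousOn f' (Ioc (-1) (-1/2)) →
      Tendsto (fun z => f z / (z + 1) ^ ((i : ℝ) - 1/2))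
        (nhdsWithin (-1) (Ioi (-1))) (nhds 0) →
      (∫⁻ z in Ioc (-1 : ℝ) (-1/2), ENNReal.ofReal ((f z) ^ 2 / (z + 1) ^ (2 * i))) ≠ ⊤ →
      (∫⁻ z in Ioc (-1 : ℝ) (-1/2), ENNReal.ofReal ((f z) ^ 2 / (z + 1) ^ (2 * i)))
        ≤ ENNReal.ofReal C *
            ∫⁻ z in Ioc (-1 : ℝ) (-1/2),
              ENNReal.ofReal ((f' z) ^ 2 / (z + 1) ^ (2 * (i - 1))) := by
  refine ⟨4, by norm_num, ?_⟩
  intro f f' hf hf' hlim hfin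
  set s : Set ℝ := Ioc (-1 : ℝ) (-1/2) with hs
  set F : ℝ → ℝ := fun z => f z ^ 2 / (z + 1) ^ (2 * i) with hF
  set G : ℝ → ℝ := fun z => f' z ^ 2 / (z + 1) ^ (2 * (i - 1)) with hG
  have hFnn : ∀ z, 0 ≤ F z := fun z =>
    div_nonneg (sq_nonneg _) (by rw [pow_mul]; exact pow_nonneg (sq_nonneg _) _)
  have hGnn : ∀ z, 0 ≤ G z := fun z =>
    div_nonneg (sq_nonneg _) (by rw [pow_mul]; exact pow_nonneg (sq_nonneg _) _)
  by_cases hB : (∫⁻ z in s, ENNReal.ofReal (G z)) = ⊤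
  · rw [hB, ENNReal.mul_top (by norm_num)]
    exact le_top
  -- measurability / integrability
  have hcf : ContinuousOn f s := fun z hz => (hf z hz).continuousWithinAt
  have hne : ∀ n : ℕ, ∀ z ∈ s, (z + 1) ^ n ≠ 0 := by
    intro n z hz
    exact pow_ne_zero n (by simp only [hs, mem_Ioc] at hz; linarith [hz.1] : (0:ℝ) < z + 1).ne'
  have hcont_aux : ∀ n : ℕ, ContinuousOn (fun z : ℝ => (z + 1) ^ n) s :=
    fun n => ((continuous_pow n).comp (continuous_id.add continuous_const)).continuousOn
  have hcF : ContinuousOn F s := (hcf.pow 2).div (hcont_aux _) (hne _)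
  have hcG : ContinuousOn G s := (hf'.pow 2).div (hcont_aux _) (hne _)
  have hmeas : MeasurableSet s := measurableSet_Ioc
  have integrable_of : ∀ H : ℝ → ℝ, (∀ z, 0 ≤ H z) → ContinuousOn H s →
      (∫⁻ z in s, ENNReal.ofReal (H z)) ≠ ⊤ → IntegrableOn H s := by
    intro H Hnn Hc Hfin
    refine ⟨(Hc.aemeasurable hmeas).aestronglyMeasurable, ?_⟩
    rw [hasFiniteIntegral_iff_norm]
    have : ∀ z, ENNReal.ofReal ‖H z‖ = ENNReal.ofReal (H z) := by
      intro z; rw [Real.norm_of_nonneg (Hnn z)]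
    simp only [this]
    exact lt_top_iff_ne_top.2 Hfin
  have hIF : IntegrableOn F s := integrable_of F hFnn hcF hfin
  have hIG : IntegrableOn G s := integrable_of G hGnn hcG hB
  -- rewrite lintegrals as ofReal of Bochner integrals
  have hAeq : (∫⁻ z in s, ENNReal.ofReal (F z)) = ENNReal.ofReal (∫ z in s, F z) :=
    (ofReal_integral_eq_lintegral_ofReal hIF (Eventually.of_forall hFnn)).symm
  have hBeq : (∫⁻ z in s, ENNReal.ofReal (G z)) = ENNReal.ofReal (∫ z in s, G z) :=
    (ofReal_integral_eq_lintegral_ofReal hIG (Eventually.of_forall hGnn)).symm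
  rw [hAeq, hBeq, ← ENNReal.ofReal_mul (by norm_num : (0:ℝ) ≤ 4)]
  apply ENNReal.ofReal_le_ofReal
  -- real inequality via limit
  set a : ℕ → ℝ := fun n => -1 + 1 / (4 * (n + 1)) with ha
  have ha_mem : ∀ n, a n ∈ Ioo (-1 : ℝ) (-1/2) := by
    intro n
    constructor
    · simp only [ha]
      have : (0:ℝ) < 1 / (4 * (n + 1)) := by positivity
      linarith
    · simp only [ha]
      have h1 : (1:ℝ) ≤ (n:ℝ) + 1 := by linarith [Nat.cast_nonneg (α := ℝ) n]
      have : 1 / (4 * ((n:ℝ) + 1)) ≤ 1 / 4 := by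
        apply div_le_div_of_nonneg_left (by norm_num) (by norm_num)
        linarith
      linarith
  have ha_anti : Antitone a := by
    intro m n hmn
    simp only [ha]
    have h1 : (0:ℝ) < 4 * ((m:ℝ) + 1) := by positivity
    have h2 : 4 * ((m:ℝ) + 1) ≤ 4 * ((n:ℝ) + 1) := by
      have : (m:ℝ) ≤ n := by exact_mod_cast hmn
      linarith
    have := one_div_le_one_div_of_le h1 h2
    linarith
  -- monotone sets, union
  have hmono : Monotone (fun n => Ioc (a n) (-1/2 : ℝ)) := fun m n hmn =>
    Ioc_subset_Ioc_left (ha_anti hmn)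
  have hunion : (⋃ n, Ioc (a n) (-1/2 : ℝ)) = s := by
    apply Subset.antisymm
    · refine iUnion_subset fun n => Ioc_subset_Ioc_left (ha_mem n).1.le
    · intro z hz
      simp only [hs, mem_Ioc] at hz
      have hz1 : 0 < z + 1 := by linarith [hz.1]
      obtain ⟨n, hn⟩ := exists_nat_one_div_lt hz1
      refine mem_iUnion.2 ⟨n, ?_, hz.2⟩
      simp only [ha]
      have h4 : 1 / (4 * ((n:ℝ) + 1)) ≤ 1 / ((n:ℝ) + 1) := by
        apply div_le_div_of_nonneg_left (by norm_num) (by positivity)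
        linarith [Nat.cast_nonneg (α := ℝ) n]
      linarith
  have hφtend : Tendsto (fun n => ∫ z in Ioc (a n) (-1/2 : ℝ), F z) atTop
      (𝓝 (∫ z in s, F z)) := by
    have := tendsto_setIntegral_of_monotone (fun n => measurableSet_Ioc) hmono
      (hunion ▸ hIF)
    rwa [hunion] at this
  -- boundary term tends to 0
  have ha_tend : Tendsto a atTop (nhdsWithin (-1 : ℝ) (Ioi (-1))) := by
    apply tendsto_nhdsWithin_of_tendsto_nhds_of_eventually_within
    · have h0 : Tendsto (fun n : ℕ => 4 * ((n:ℝ) + 1)) atTop atTop := by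
        apply Tendsto.const_mul_atTop (by norm_num : (0:ℝ) < 4)
        exact tendsto_atTop_add_const_right _ _ tendsto_natCast_atTop_atTop
      have h1 : Tendsto (fun n : ℕ => 1 / (4 * ((n:ℝ) + 1))) atTop (𝓝 0) := by
        simpa [Pi.inv_def, one_div, mul_inv, mul_comm] using h0.inv_tendsto_atTop
      have := h1.const_add (-1 : ℝ)
      simpa [ha] using this
    · exact Eventually.of_forall fun n => (ha_mem n).1
  have hgtend : Tendsto (fun n => f (a n) ^ 2 / (a n + 1) ^ (2 * i - 1)) atTop (𝓝 0) := by
    have hsq : Tendsto (fun z => (f z / (z + 1) ^ ((i : ℝ) - 1/2)) ^ 2)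
        (nhdsWithin (-1) (Ioi (-1))) (𝓝 0) := by
      have := hlim.pow 2
      simpa using this
    have hcongr : ∀ z ∈ Ioi (-1 : ℝ),
        (f z / (z + 1) ^ ((i : ℝ) - 1/2)) ^ 2 = f z ^ 2 / (z + 1) ^ (2 * i - 1) := by
      intro z hz
      have hz1 : (0:ℝ) < z + 1 := by simp only [mem_Ioi] at hz; linarith
      have hr : ((z + 1) ^ ((i : ℝ) - 1/2)) ^ 2 = (z + 1) ^ (2 * i - 1 : ℕ) := by
        rw [← Real.rpow_natCast ((z + 1) ^ ((i : ℝ) - 1/2)) 2, ← Real.rpow_mul hz1.le,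
          ← Real.rpow_natCast (z + 1) (2 * i - 1)]
        congr 1
        push_cast [Nat.cast_sub (by omega : 1 ≤ 2 * i)]
        ring
      rw [div_pow, hr]
    have hev : (fun z => (f z / (z + 1) ^ ((i : ℝ) - 1/2)) ^ 2) =ᶠ[nhdsWithin (-1) (Ioi (-1))]
        (fun z => f z ^ 2 / (z + 1) ^ (2 * i - 1)) :=
      eventually_mem_nhdsWithin.mono fun z hz => hcongr z hz
    exact (hsq.congr' hev).comp ha_tend
  -- assemble
  have hRHS : Tendsto (fun n => 2 * (f (a n) ^ 2 / (a n + 1) ^ (2 * i - 1)) +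
      4 * ∫ z in s, G z) atTop (𝓝 (4 * ∫ z in s, G z)) := by
    have := (hgtend.const_mul 2).add (tendsto_const_nhds (x := 4 * ∫ z in s, G z))
    simpa using this
  exact le_of_tendsto_of_tendsto' hφtend hRHS
    (fun n => percut i hi f f' hf hf' hIG (a n) (ha_mem n))
end

section
/- For every integer n ≥ 0 there exists a constant C = C(n) > 0 such that: for every f : ℝ → ℝ that is (n+2)-times continuously differentiable on [-1,-1/2] with f(-1) = 0 and f'(-1) = 0, and for every z ∈ (-1,-1/2], one has |dⁿ/dzⁿ ( f(z)/(z+1)² )| ≤ C · sup_{t∈[-1,-1/2]} |f^{(n+2)}(t)|. -/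
open Set
open scoped Nat

/-! ### Auxiliary lemmas -/

private lemma myIDW_congr_set {f : ℝ → ℝ} {s t : Set ℝ} {x : ℝ} (h : s =ᶠ[nhds x] t) (k : ℕ) :
    iteratedDerivWithin k f s x = iteratedDerivWithin k f t x := by
  simp only [iteratedDerivWithin_eq_iteratedFDerivWithin, iteratedFDerivWithin_congr_set h k]

/-- Iterated derivatives compose. -/
private lemma myIDW_comp {f : ℝ → ℝ} {s : Set ℝ} (hs : UniqueDiffOn ℝ s) (k : ℕ) :
    ∀ j : ℕ, Set.EqOn (iteratedDerivWithin j (iteratedDerivWithin k f s) s)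
      (iteratedDerivWithin (k + j) f s) s := by
  intro j
  induction j with
  | zero => intro x hx; simp
  | succ j IH =>
    intro x hx
    rw [iteratedDerivWithin_succ,
      show k + (j + 1) = (k + j) + 1 by omega,
      iteratedDerivWithin_succ]
    exact derivWithin_congr IH (IH hx)

/-- Smoothness of iterated derivatives. -/
private lemma myCD_iDW {f : ℝ → ℝ} {s : Set ℝ} (hs : UniqueDiffOn ℝ s) {k m : ℕ}
    (hf : ContDiffOn ℝ ((k + m : ℕ) : ℕ) f s) :
    ContDiffOn ℝ (m : ℕ) (iteratedDerivWithin k f s) s := by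
  have hF : ContDiffOn ℝ (m : ℕ) (iteratedFDerivWithin ℝ k f s) s := fun x hx =>
    (hf x hx).iteratedFDerivWithin_right hs
      (by exact_mod_cast (by omega : m + k ≤ k + m)) hx
  have := hF.continuousLinearMap_comp
    ((ContinuousMultilinearMap.piFieldEquiv ℝ (Fin k) ℝ).symm.toContinuousLinearEquiv
      : (ℝ [×k]→L[ℝ] ℝ) ≃L[ℝ] ℝ).toContinuousLinearMap
  rw [iteratedDerivWithin_eq_equiv_comp]
  exact this

private lemma myTop_to_nat {g : ℝ → ℝ} (hg : ContDiff ℝ (⊤ : ℕ∞) g) (k : ℕ) :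
    ContDiff ℝ (k : ℕ) g :=
  hg.of_le (by exact_mod_cast le_top)

/-- `iteratedDerivWithin` of a globally smooth function equals `iteratedDeriv`. -/
private lemma myIDW_eq_iD {g : ℝ → ℝ} (hg : ContDiff ℝ (⊤ : ℕ∞) g) {s : Set ℝ}
    (hs : UniqueDiffOn ℝ s) (k : ℕ) :
    Set.EqOn (iteratedDerivWithin k g s) (iteratedDeriv k g) s := by
  induction k with
  | zero => intro x hx; simp
  | succ k IH =>
    intro x hx
    rw [iteratedDerivWithin_succ, iteratedDeriv_succ,
      derivWithin_congr IH (IH hx)]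
    refine DifferentiableAt.derivWithin ?_ (hs.uniqueDiffWithinAt hx)
    exact ((myTop_to_nat hg (k + 1)).differentiable_iteratedDeriv k
      (by exact_mod_cast k.lt_succ_self)).differentiableAt

private lemma myID_cmul (k : ℕ) (c : ℝ) {g : ℝ → ℝ} (hg : ContDiff ℝ (⊤ : ℕ∞) g) :
    iteratedDeriv k (fun x : ℝ => c * g x) = fun x => c * iteratedDeriv k g x := by
  funext x
  rw [← iteratedDerivWithin_univ, ← iteratedDerivWithin_univ]
  exact iteratedDerivWithin_const_mul (mem_univ x) uniqueDiffOn_univ c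
    (myTop_to_nat hg k).contDiffWithinAt

private lemma myCD_monomial (i : ℕ) : ContDiff ℝ (⊤ : ℕ∞) (fun w : ℝ => (w + 1) ^ i) :=
  (contDiff_id.add contDiff_const).pow i

private lemma myID_monomial (k : ℕ) : ∀ i : ℕ, iteratedDeriv k (fun w : ℝ => (w + 1) ^ i)
    = fun w => (i.descFactorial k : ℝ) * (w + 1) ^ (i - k) := by
  induction k with
  | zero => intro i; funext w; simp
  | succ k IH =>
    intro i
    rw [iteratedDeriv_succ']
    have hderiv : deriv (fun w : ℝ => (w + 1) ^ i) = fun w => (i : ℝ) * (w + 1) ^ (i - 1) := by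
      funext w
      have := (((hasDerivAt_id w).add_const 1).pow i).deriv
      simpa using this
    rw [hderiv]
    cases i with
    | zero =>
      simp only [Nat.cast_zero, zero_mul]
      rw [show (fun _ : ℝ => (0 : ℝ)) = (fun w : ℝ => (0 : ℝ) * (w + 1) ^ 0) by
        funext w; ring, myID_cmul k 0 (myCD_monomial 0)]
      funext w
      simp [Nat.descFactorial]
    | succ j =>
      rw [show (fun w : ℝ => ((j + 1 : ℕ) : ℝ) * (w + 1) ^ (j + 1 - 1))
          = (fun w : ℝ => ((j + 1 : ℕ) : ℝ) * (w + 1) ^ j) by norm_num,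
        myID_cmul k _ (myCD_monomial j), IH j]
      funext w
      rw [Nat.succ_descFactorial_succ, Nat.succ_sub_succ]
      push_cast
      ring

private lemma myID_cmul_monomial (c : ℝ) (i k : ℕ) (x : ℝ) :
    iteratedDeriv k (fun w : ℝ => c * (w + 1) ^ i) x
      = c * (i.descFactorial k : ℝ) * (x + 1) ^ (i - k) := by
  rw [myID_cmul k c (myCD_monomial i), myID_monomial k i]
  ring

private lemma myID_sum (k m : ℕ) (F : ℕ → ℝ → ℝ)
    (hF : ∀ i ∈ Finset.range m, ContDiff ℝ (⊤ : ℕ∞) (F i)) (x : ℝ) :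
    iteratedDeriv k (fun w => ∑ i ∈ Finset.range m, F i w) x
      = ∑ i ∈ Finset.range m, iteratedDeriv k (F i) x := by
  have h := iteratedFDeriv_sum (𝕜 := ℝ) (f := F) (u := Finset.range m) (i := k)
    (fun j hj => myTop_to_nat (hF j hj) k)
  simp only [iteratedDeriv_eq_iteratedFDeriv]
  rw [show (fun w => ∑ i ∈ Finset.range m, F i w) = (∑ j ∈ Finset.range m, F j ·) from rfl, h]
  simp [ContinuousMultilinearMap.sum_apply]

/-- Lemma 4.5 ("Using Taylor theory to control the L∞ norm"): for every `n ≥ 0` there is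
`C = C(n) > 0` such that every `f` that is `(n+2)`-times continuously differentiable on
`[-1,-1/2]` with `f(-1) = 0` and `f'(-1) = 0` satisfies, for all `z ∈ (-1,-1/2]`,
`|dⁿ/dzⁿ (f(z)/(z+1)²)| ≤ C · sup |f⁽ⁿ⁺²⁾|`. -/
theorem taylor_quotient_bound (n : ℕ) :
    ∃ C > 0, ∀ f : ℝ → ℝ,
      ContDiffOn ℝ (n + 2) f (Icc (-1) (-1/2)) →
      f (-1) = 0 →
      derivWithin f (Icc (-1) (-1/2)) (-1) = 0 →
      ∀ M : ℝ,
        (∀ t ∈ Icc (-1 : ℝ) (-1/2),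
          |iteratedDerivWithin (n + 2) f (Icc (-1) (-1/2)) t| ≤ M) →
        ∀ z ∈ Ioc (-1 : ℝ) (-1/2),
          |iteratedDerivWithin n (fun w => f w / (w + 1) ^ 2) (Icc (-1) (-1/2)) z| ≤ C * M := by
  refine ⟨2 ^ n, by positivity, ?_⟩
  intro f hf hf0 hf1 M hM z hz
  set s : Set ℝ := Icc (-1) (-1/2) with hs_def
  have hlt : (-1 : ℝ) < -1/2 := by norm_num
  have hs : UniqueDiffOn ℝ s := uniqueDiffOn_Icc hlt
  obtain ⟨hz1, hz2⟩ := hz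
  have hzs : z ∈ s := ⟨hz1.le, hz2⟩
  have h1s : (-1 : ℝ) ∈ s := left_mem_Icc.mpr hlt.le
  have hM0 : 0 ≤ M := le_trans (abs_nonneg _) (hM _ h1s)
  set c : ℝ := (z + -1) / 2 with hc_def
  have hc1 : -1 < c := by rw [hc_def]; linarith
  have hcz : c < z := by rw [hc_def]; linarith
  set t : Set ℝ := Icc c (-1/2) with ht_def
  have hct : c < -1/2 := lt_of_lt_of_le hcz hz2
  have ht : UniqueDiffOn ℝ t := uniqueDiffOn_Icc hct
  have hzt : z ∈ t := ⟨hcz.le, hz2⟩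
  have hts : t ⊆ s := Icc_subset_Icc hc1.le le_rfl
  have hst : s =ᶠ[nhds z] t := by
    rw [Filter.eventuallyEq_set]
    filter_upwards [Ioi_mem_nhds hcz] with w (hw : c < w)
    simp only [hs_def, ht_def, mem_Icc]
    constructor
    · rintro ⟨_, h2⟩; exact ⟨hw.le, h2⟩
    · rintro ⟨_, h2⟩; exact ⟨by linarith, h2⟩
  -- Taylor coefficients of `f` at `-1`
  set cf : ℕ → ℝ := fun i => iteratedDerivWithin i f s (-1) with hcf_def
  have hcf0 : cf 0 = 0 := by simp [hcf_def, hf0]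
  have hcf1 : cf 1 = 0 := by
    rw [hcf_def]
    simp only
    rw [iteratedDerivWithin_one]
    exact hf1
  -- the Taylor polynomial `P`, the quotient polynomial `Q`, and the remainder `rr`
  set P : ℝ → ℝ := fun w => ∑ i ∈ Finset.range (n + 2),
    (((i ! : ℝ))⁻¹ * cf i) * (w + 1) ^ i with hP_def
  set Q : ℝ → ℝ := fun w => ∑ i ∈ Finset.range n,
    ((((i + 2)! : ℝ))⁻¹ * cf (i + 2)) * (w + 1) ^ i with hQ_def
  set hh : ℝ → ℝ := fun w => ((w + 1) ^ 2)⁻¹ with hh_def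
  set rr : ℝ → ℝ := fun w => f w - P w with hrr_def
  have hPtop : ContDiff ℝ (⊤ : ℕ∞) P :=
    ContDiff.sum fun i _ => contDiff_const.mul (myCD_monomial i)
  have hQtop : ContDiff ℝ (⊤ : ℕ∞) Q :=
    ContDiff.sum fun i _ => contDiff_const.mul (myCD_monomial i)
  have hw1pos : ∀ w ∈ t, (0 : ℝ) < w + 1 := by
    intro w hw
    have : c ≤ w := hw.1
    linarith
  -- smoothness of the pieces on `t`
  have hfn : ContDiffOn ℝ (n : ℕ) f s :=
    hf.of_le (by exact_mod_cast (by omega : n ≤ n + 2))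
  have hrrt : ContDiffOn ℝ (n : ℕ) rr t :=
    (hfn.mono hts).sub ((myTop_to_nat hPtop n).contDiffOn.mono (subset_univ t))
  have hhht : ContDiffOn ℝ (n : ℕ) hh t := by
    refine ContDiffOn.inv ?_ ?_
    · exact ((myTop_to_nat (myCD_monomial 2) n).contDiffOn).mono (subset_univ t)
    · intro w hw
      have := hw1pos w hw
      positivity
  -- the key algebraic identity : `P w = (w+1)^2 * Q w`
  have hPQ : ∀ w : ℝ, P w = (w + 1) ^ 2 * Q w := by
    intro w
    simp only [hP_def, hQ_def]
    rw [Finset.sum_range_succ', Finset.sum_range_succ', hcf0, hcf1, Finset.mul_sum]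
    simp only [mul_zero, zero_mul, add_zero, pow_zero, mul_one]
    refine Finset.sum_congr rfl fun i _ => ?_
    ring
  -- `f w / (w+1)^2 = rr w * hh w + Q w` on `t`
  have hEq : Set.EqOn (fun w => f w / (w + 1) ^ 2) (fun w => rr w * hh w + Q w) t := by
    intro w hw
    have hw1 : (0 : ℝ) < w + 1 := hw1pos w hw
    have hw2 : ((w + 1) ^ 2) ≠ 0 := by positivity
    show f w / (w + 1) ^ 2 = (f w - P w) * ((w + 1) ^ 2)⁻¹ + Q w
    rw [div_eq_iff hw2]
    have := hPQ w
    field_simp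
    linarith [this]
  -- the `n`-th derivative of `Q` vanishes
  have hQder : iteratedDeriv n Q z = 0 := by
    simp only [hQ_def]
    rw [myID_sum n n _ (fun i _ => contDiff_const.mul (myCD_monomial i)) z]
    refine Finset.sum_eq_zero fun i hi => ?_
    rw [myID_cmul_monomial]
    rw [Nat.descFactorial_of_lt (Finset.mem_range.mp hi)]
    simp
  -- Step 1 : reduce to the set `t` and to `rr * hh`
  rw [myIDW_congr_set hst n, iteratedDerivWithin_congr hEq hzt]
  have hsplit : (fun w => rr w * hh w + Q w) = ((fun w => rr w * hh w) + Q) := rfl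
  rw [hsplit, iteratedDerivWithin_add hzt ht ((hrrt.mul hhht) z hzt)
    ((myTop_to_nat hQtop n).contDiffWithinAt),
    myIDW_eq_iD hQtop ht n hzt, hQder, add_zero]
  -- explicit formula for the iterated derivatives of `hh` on `t`
  have claimH : ∀ m : ℕ, ∀ w ∈ t, iteratedDerivWithin m hh t w
      = (-1 : ℝ) ^ m * ((m + 1)! : ℝ) * ((w + 1) ^ (m + 2))⁻¹ := by
    intro m
    induction m with
    | zero =>
      intro w hw
      simp [hh_def]
    | succ m IH =>
      intro w hw
      have hw1 : (0 : ℝ) < w + 1 := hw1pos w hw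
      have hw0 : (w + 1) ≠ 0 := ne_of_gt hw1
      rw [iteratedDerivWithin_succ,
        derivWithin_congr (fun y hy => IH y hy) (IH w hw)]
      have h1 : HasDerivAt (fun y : ℝ => (y + 1) ^ (m + 2))
          (((m + 2 : ℕ) : ℝ) * (w + 1) ^ (m + 1) * 1) w := by
        have := ((hasDerivAt_id w).add_const 1).fun_pow (m + 2)
        simpa using this
      have hd : HasDerivAt (fun y : ℝ => (-1 : ℝ) ^ m * ((m + 1)! : ℝ) * ((y + 1) ^ (m + 2))⁻¹)
          ((-1 : ℝ) ^ m * ((m + 1)! : ℝ) *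
            (-(((m + 2 : ℕ) : ℝ) * (w + 1) ^ (m + 1) * 1) / ((w + 1) ^ (m + 2)) ^ 2)) w :=
        (h1.inv (by positivity)).const_mul _
      rw [hd.differentiableAt.derivWithin (ht.uniqueDiffWithinAt hw), hd.deriv]
      have hfac : (((m + 1) + 1)! : ℝ) = ((m + 2 : ℕ) : ℝ) * ((m + 1)! : ℝ) := by
        rw [Nat.factorial_succ]; push_cast; ring
      rw [hfac]
      field_simp
      ring
  -- Step 2 : Leibniz bound
  have hleib := norm_iteratedFDerivWithin_mul_le (𝕜 := ℝ)
    hrrt hhht ht hzt (le_refl ((n : ℕ) : WithTop ℕ∞))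
  have hnorm : |iteratedDerivWithin n (fun w => rr w * hh w) t z|
      = ‖iteratedFDerivWithin ℝ n (fun w => rr w * hh w) t z‖ := by
    rw [norm_iteratedFDerivWithin_eq_norm_iteratedDerivWithin, Real.norm_eq_abs]
  rw [hnorm]
  refine hleib.trans ?_
  have hu : (0 : ℝ) < z + 1 := by linarith
  -- termwise bound
  have hterm : ∀ i ∈ Finset.range (n + 1),
      (n.choose i : ℝ) * ‖iteratedFDerivWithin ℝ i rr t z‖ *
        ‖iteratedFDerivWithin ℝ (n - i) hh t z‖ ≤ (n.choose i : ℝ) * M := by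
    intro i hi
    have hin : i ≤ n := Nat.lt_succ_iff.mp (Finset.mem_range.mp hi)
    set m : ℕ := n - i with hm_def
    -- the bound on the derivatives of `hh`
    have hB : ‖iteratedFDerivWithin ℝ (n - i) hh t z‖
        = ((m + 1)! : ℝ) * ((z + 1) ^ (m + 2))⁻¹ := by
      rw [norm_iteratedFDerivWithin_eq_norm_iteratedDerivWithin, Real.norm_eq_abs,
        claimH (n - i) z hzt, ← hm_def, abs_mul, abs_mul, abs_pow, abs_neg, abs_one, one_pow,
        one_mul, abs_of_nonneg (by positivity : (0:ℝ) ≤ ((m + 1)! : ℝ)),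
        abs_of_nonneg (by positivity : (0:ℝ) ≤ ((z + 1) ^ (m + 2))⁻¹)]
    -- the Taylor bound on the derivatives of `rr`
    have hA : ‖iteratedFDerivWithin ℝ i rr t z‖ ≤ M * (z + 1) ^ (m + 2) / ((m + 1)! : ℝ) := by
      rw [norm_iteratedFDerivWithin_eq_norm_iteratedDerivWithin, Real.norm_eq_abs,
        ← myIDW_congr_set hst i]
      have hfi : ContDiffOn ℝ (i : ℕ) f s :=
        hf.of_le (by exact_mod_cast (by omega : i ≤ n + 2))
      have hFc : ContDiffOn ℝ ((m + 2 : ℕ)) (iteratedDerivWithin i f s) s := by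
        apply myCD_iDW hs
        have hcast : ((i + (m + 2) : ℕ) : WithTop ℕ∞) = ((n : WithTop ℕ∞) + 2) := by
          rw [show i + (m + 2) = n + 2 by omega]; push_cast; ring
        rw [hcast]; exact hf
      have hFc' : ContDiffOn ℝ ((m + 1 : ℕ) + 1) (iteratedDerivWithin i f s) s := by
        have hcast : (((m + 1 : ℕ) : WithTop ℕ∞) + 1) = ((m + 2 : ℕ) : WithTop ℕ∞) := by
          push_cast; ring
        rw [hcast]; exact hFc
      have hC : ∀ y ∈ s,
          ‖iteratedDerivWithin (m + 1 + 1) (iteratedDerivWithin i f s) s y‖ ≤ M := by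
        intro y hy
        rw [Real.norm_eq_abs, myIDW_comp hs i (m + 1 + 1) hy,
          show i + (m + 1 + 1) = n + 2 by omega]
        exact hM y hy
      have htay := taylor_mean_remainder_bound (f := iteratedDerivWithin i f s)
        (n := m + 1) hlt.le hFc' hzs hC
      have hsub : iteratedDerivWithin i rr s z
          = iteratedDerivWithin i f s z - iteratedDeriv i P z := by
        have h1 : iteratedDerivWithin i (f - P) s z
            = iteratedDerivWithin i f s z - iteratedDerivWithin i P s z :=
          iteratedDerivWithin_sub hzs hs (hfi z hzs)
            ((myTop_to_nat hPtop i).contDiffWithinAt)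
        rw [show rr = f - P from rfl, h1, myIDW_eq_iD hPtop hs i hzs]
      have hPtaylor : iteratedDeriv i P z
          = taylorWithinEval (iteratedDerivWithin i f s) (m + 1) s (-1) z := by
        rw [taylor_within_apply]
        simp only [hP_def]
        rw [myID_sum i (n + 2) _ (fun u _ => contDiff_const.mul (myCD_monomial u)) z,
          show n + 2 = i + (m + 2) by omega, Finset.sum_range_add]
        have hz0 : ∑ u ∈ Finset.range i,
            iteratedDeriv i (fun w => ((u ! : ℝ))⁻¹ * cf u * (w + 1) ^ u) z = 0 := by
          refine Finset.sum_eq_zero fun u hu => ?_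
          rw [myID_cmul_monomial, Nat.descFactorial_of_lt (Finset.mem_range.mp hu)]
          simp
        rw [hz0, zero_add]
        refine Finset.sum_congr rfl fun j hj => ?_
        rw [myID_cmul_monomial, smul_eq_mul, sub_neg_eq_add,
          myIDW_comp hs i j h1s, Nat.add_sub_cancel_left]
        have hfac : (j ! : ℝ) * ((i + j).descFactorial i : ℝ) = ((i + j)! : ℝ) := by
          have h := Nat.factorial_mul_descFactorial (Nat.le_add_right i j)
          rw [Nat.add_sub_cancel_left] at h
          exact_mod_cast h
        have hd0 : ((i + j).descFactorial i : ℝ) ≠ 0 := by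
          rw [Nat.cast_ne_zero, ← Nat.pos_iff_ne_zero]
          rw [Nat.pos_iff_ne_zero, Ne, Nat.descFactorial_eq_zero_iff_lt]
          omega
        have hj0 : (j ! : ℝ) ≠ 0 := by positivity
        have hij0 : ((i + j)! : ℝ) ≠ 0 := by positivity
        have hcfr : iteratedDerivWithin (i + j) f s (-1) = cf (i + j) := rfl
        rw [hcfr, ← hfac]
        field_simp
      rw [hsub, hPtaylor]
      have := htay
      rw [Real.norm_eq_abs, sub_neg_eq_add] at this
      exact this
    rw [hB]
    calc (n.choose i : ℝ) * ‖iteratedFDerivWithin ℝ i rr t z‖ *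
          (((m + 1)! : ℝ) * ((z + 1) ^ (m + 2))⁻¹)
        ≤ (n.choose i : ℝ) * (M * (z + 1) ^ (m + 2) / ((m + 1)! : ℝ)) *
          (((m + 1)! : ℝ) * ((z + 1) ^ (m + 2))⁻¹) := by
          gcongr
      _ = (n.choose i : ℝ) * M := by
          have h1 : ((z + 1) ^ (m + 2)) ≠ 0 := by positivity
          have h2 : ((m + 1)! : ℝ) ≠ 0 := by positivity
          field_simp
  refine (Finset.sum_le_sum hterm).trans ?_
  rw [← Finset.sum_mul, ← Nat.cast_sum, Nat.sum_range_choose]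
  push_cast
  exact le_rfl
end

section
/- Let γ ∈ (-1/2, 1/2), let N ≥ 2 be an integer, and let α ∈ (1, 3/2 - γ]. Then there exists a constant C > 0 such that: for every f : ℝ → ℝ that is (N+1)-times continuously differentiable on [-1,0) and continuously differentiable on [-1,0], for which all the integrals below are finite, one has sup_{z∈[-1,0]}|f(z)| + sup_{z∈[-1,0]}|f'(z)| + Σ_{j=2}^{N} sup_{z∈[-1,0)} (-z)^{j-α}|f^{(j)}(z)| ≤ C [ (∫_{-1}^0 f²)^{1/2} + (∫_{-1}^0 (f')²)^{1/2} + Σ_{j=2}^{N+1} (∫_{-1}^0 (-z)^{2(j-2+γ)} f^{(j)}(z)² dz)^{1/2} ]. -/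
open MeasureTheory Set

/-- Cauchy–Schwarz for set integrals of real functions. -/
lemma cs_setIntegral {s : Set ℝ} {φ ψ : ℝ → ℝ}
    (hφm : AEStronglyMeasurable φ (volume.restrict s))
    (hψm : AEStronglyMeasurable ψ (volume.restrict s))
    (hφ : IntegrableOn (fun x => φ x ^ 2) s)
    (hψ : IntegrableOn (fun x => ψ x ^ 2) s) :
    ∫ x in s, |φ x| * |ψ x| ≤
      Real.sqrt (∫ x in s, φ x ^ 2) * Real.sqrt (∫ x in s, ψ x ^ 2) := by
  have hpq : Real.HolderConjugate 2 2 := Real.HolderConjugate.two_two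
  have h2 : (ENNReal.ofReal (2:ℝ)) = 2 := by norm_num [ENNReal.ofReal_ofNat]
  have hφ2 : MemLp (fun x => |φ x|) (ENNReal.ofReal (2:ℝ)) (volume.restrict s) := by
    rw [h2, memLp_two_iff_integrable_sq (by simpa [Real.norm_eq_abs] using hφm.norm :
      AEStronglyMeasurable (fun x => |φ x|) (volume.restrict s))]
    simpa [sq_abs, IntegrableOn] using hφ
  have hψ2 : MemLp (fun x => |ψ x|) (ENNReal.ofReal (2:ℝ)) (volume.restrict s) := by
    rw [h2, memLp_two_iff_integrable_sq (by simpa [Real.norm_eq_abs] using hψm.norm :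
      AEStronglyMeasurable (fun x => |ψ x|) (volume.restrict s))]
    simpa [sq_abs, IntegrableOn] using hψ
  have := MeasureTheory.integral_mul_le_Lp_mul_Lq_of_nonneg hpq
    (Filter.Eventually.of_forall fun x => abs_nonneg (φ x))
    (Filter.Eventually.of_forall fun x => abs_nonneg (ψ x)) hφ2 hψ2
  calc ∫ x in s, |φ x| * |ψ x| ≤
      (∫ x in s, |φ x| ^ (2:ℝ)) ^ ((1:ℝ)/2) * (∫ x in s, |ψ x| ^ (2:ℝ)) ^ ((1:ℝ)/2) := this
    _ = Real.sqrt (∫ x in s, φ x ^ 2) * Real.sqrt (∫ x in s, ψ x ^ 2) := by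
        rw [Real.sqrt_eq_rpow, Real.sqrt_eq_rpow]
        congr 2 <;> ·
          apply integral_congr_ae
          filter_upwards with x
          rw [show ((2:ℝ)) = ((2:ℕ):ℝ) by norm_num, Real.rpow_natCast]
          simp [sq_abs]

/-- There is a point where `|g|` is at most its average. -/
lemma exists_le_avg {a b : ℝ} (hab : a < b) {g : ℝ → ℝ} (hg : ContinuousOn g (Icc a b)) :
    ∃ y ∈ Icc a b, |g y| * (b - a) ≤ ∫ x in Ioo a b, |g x| := by
  obtain ⟨y, hy, hmin⟩ := isCompact_Icc.exists_isMinOn (nonempty_Icc.2 hab.le) hg.abs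
  refine ⟨y, hy, ?_⟩
  have hint : IntegrableOn (fun x => |g x|) (Ioo a b) :=
    (hg.abs.integrableOn_Icc).mono_set Ioo_subset_Icc_self
  calc |g y| * (b - a) = ∫ _ in Ioo a b, |g y| := by
        rw [setIntegral_const, Real.volume_real_Ioo_of_le hab.le,
          smul_eq_mul]
        ring
    _ ≤ ∫ x in Ioo a b, |g x| := by
        apply setIntegral_mono_on (integrableOn_const (by simp [Real.volume_Ioo]))
          hint measurableSet_Ioo
        intro x hx
        exact hmin (Ioo_subset_Icc_self hx)

/-- FTC bound: `|f v - f u| ≤ ∫_s |f'|` when `Ioo u v ⊆ s`. -/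
lemma abs_sub_le_setIntegral {u v : ℝ} {s : Set ℝ} {f f' : ℝ → ℝ} (huv : u ≤ v)
    (hc : ContinuousOn f (Icc u v))
    (hd : ∀ x ∈ Ioo u v, HasDerivAt f (f' x) x)
    (hi : IntervalIntegrable f' volume u v)
    (hint : IntegrableOn (fun x => |f' x|) s)
    (hsub : Ioo u v ⊆ s) :
    |f v - f u| ≤ ∫ x in s, |f' x| := by
  have hftc : ∫ x in u..v, f' x = f v - f u :=
    intervalIntegral.integral_eq_sub_of_hasDeriv_right_of_le huv hc
      (fun x hx => (hd x hx).hasDerivWithinAt) hi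
  rw [← hftc]
  calc |∫ x in u..v, f' x| ≤ ∫ x in u..v, |f' x| :=
        intervalIntegral.abs_integral_le_integral_abs huv
    _ = ∫ x in Ioo u v, |f' x| := by
        rw [intervalIntegral.integral_of_le huv, integral_Ioc_eq_integral_Ioo]
    _ ≤ ∫ x in s, |f' x| := by
        apply setIntegral_mono_set hint
          (Filter.Eventually.of_forall fun x => abs_nonneg _)
        exact HasSubset.Subset.eventuallyLE hsub

lemma rpow_ratio_le {x m c M : ℝ} (hm : 0 < m) (h1 : m/2 ≤ x) (h2 : x ≤ m)
    (hc : |c| ≤ M) : x ^ c ≤ 2 ^ M * m ^ c := by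
  have hx : 0 < x := lt_of_lt_of_le (by linarith) h1
  have hM : (1:ℝ) ≤ 2 ^ M := Real.one_le_rpow one_le_two ((abs_nonneg c).trans hc)
  rcases le_or_gt 0 c with hc0 | hc0
  · have := Real.rpow_le_rpow hx.le h2 hc0
    nlinarith [Real.rpow_nonneg hm.le c]
  · have hstep : x ^ c ≤ (m/2) ^ c := Real.rpow_le_rpow_of_nonpos (by linarith) h1 hc0.le
    have heq : (m/2) ^ c = m ^ c * (2:ℝ) ^ (-c) := by
      rw [div_eq_mul_inv, Real.mul_rpow hm.le (by norm_num),
        Real.inv_rpow (by norm_num : (0:ℝ) ≤ 2), ← Real.rpow_neg (by norm_num : (0:ℝ) ≤ 2)]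
    have h2c : (2:ℝ) ^ (-c) ≤ 2 ^ M :=
      Real.rpow_le_rpow_of_exponent_le one_le_two ((neg_le_abs c).trans hc)
    have hmn : 0 ≤ m ^ c := Real.rpow_nonneg hm.le c
    calc x ^ c ≤ m ^ c * (2:ℝ) ^ (-c) := heq ▸ hstep
      _ ≤ m ^ c * 2 ^ M := by nlinarith
      _ = 2 ^ M * m ^ c := mul_comm _ _

lemma integrableOn_neg_rpow {r : ℝ} (hr : -1 < r) :
    IntegrableOn (fun t : ℝ => (-t) ^ r) (Ioo (-1:ℝ) 0) volume := by
  have h : IntegrableOn (fun u : ℝ => u ^ r) (Ioo 0 1) volume := by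
    have h1 : IntervalIntegrable (fun x : ℝ => x ^ r) volume 0 1 :=
      intervalIntegral.intervalIntegrable_rpow' hr
    exact (intervalIntegrable_iff_integrableOn_Ioo_of_le (by norm_num)).mp h1
  have := ((Measure.measurePreserving_neg (volume : Measure ℝ)).integrableOn_comp_preimage
      (Homeomorph.neg ℝ).measurableEmbedding (f := fun u : ℝ => u ^ r) (s := Ioo 0 1)).mpr h
  simpa [Function.comp_def, show -Ioo (0:ℝ) 1 = Ioo (-1:ℝ) 0 by rw [Set.neg_Ioo]; norm_num]
    using this

lemma abs_le_winv_add_wsq {w u : ℝ} (hw : 0 < w) : |u| ≤ w⁻¹ + w * u ^ 2 := by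
  have h1 : 0 ≤ (w * |u| - 1) ^ 2 := sq_nonneg _
  have h2 : w * u ^ 2 = w * |u| ^ 2 := by rw [sq_abs]
  have h3 : 0 < w⁻¹ := inv_pos.2 hw
  rw [h2]
  have key : 2 * |u| ≤ w⁻¹ + w * |u| ^ 2 := by
    have : w * (2 * |u|) ≤ w * (w⁻¹ + w * |u| ^ 2) := by
      have hww : w * w⁻¹ = 1 := mul_inv_cancel₀ hw.ne'
      nlinarith
    exact le_of_mul_le_mul_left this hw
  have := abs_nonneg u
  linarith

/-- The key weighted Cauchy–Schwarz bound over the interval `(z, z/2)`. -/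
lemma key_interval_bound {g : ℝ → ℝ} {z e : ℝ} (N : ℕ) (hz1 : -1 ≤ z) (hz0 : z < 0)
    (he : |e| ≤ (N:ℝ))
    (hgc : ContinuousOn g (Icc z (z/2)))
    (hw_int : IntegrableOn (fun t => (-t) ^ (2*e) * g t ^ 2) (Ioo (-1:ℝ) 0)) :
    ∫ t in Ioo z (z/2), |g t| ≤
      2^N * (-z) ^ ((1:ℝ)/2 - e) *
        Real.sqrt (∫ t in Ioo (-1:ℝ) 0, (-t) ^ (2*e) * g t ^ 2) := by
  set m : ℝ := -z with hmdef
  have hm : 0 < m := by simp [hmdef]; linarith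
  have hm1 : m ≤ 1 := by simp [hmdef]; linarith
  have hz2 : z < z/2 := by linarith
  set s : Set ℝ := Ioo z (z/2) with hsdef
  have hposIcc : ∀ t ∈ Icc z (z/2), m/2 ≤ -t ∧ -t ≤ m := by
    intro t ht
    obtain ⟨h1, h2⟩ := ht
    constructor
    · simp only [hmdef]; linarith
    · simp only [hmdef]; linarith
  have hpos : ∀ t ∈ Icc z (z/2), 0 < -t := fun t ht =>
    lt_of_lt_of_le (by positivity) (hposIcc t ht).1
  have hssub : s ⊆ Icc z (z/2) := Ioo_subset_Icc_self
  have hsI : s ⊆ Ioo (-1:ℝ) 0 := by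
    intro t ht
    exact ⟨lt_of_le_of_lt hz1 ht.1, lt_trans ht.2 (by linarith)⟩
  set φ : ℝ → ℝ := fun t => (-t) ^ (-e) with hφdef
  set ψ : ℝ → ℝ := fun t => (-t) ^ e * g t with hψdef
  have hφc : ContinuousOn φ (Icc z (z/2)) :=
    (continuousOn_id.neg).rpow_const (fun t ht => Or.inl (ne_of_gt (hpos t ht)))
  have hψc : ContinuousOn ψ (Icc z (z/2)) :=
    ((continuousOn_id.neg).rpow_const (fun t ht => Or.inl (ne_of_gt (hpos t ht)))).mul hgc
  have hφm : AEStronglyMeasurable φ (volume.restrict s) :=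
    (hφc.mono hssub).aestronglyMeasurable measurableSet_Ioo
  have hψm : AEStronglyMeasurable ψ (volume.restrict s) :=
    (hψc.mono hssub).aestronglyMeasurable measurableSet_Ioo
  have hφ2 : IntegrableOn (fun x => φ x ^ 2) s :=
    ((hφc.pow 2).integrableOn_Icc).mono_set hssub
  have hψeq : ∀ t ∈ s, (-t) ^ (2*e) * g t ^ 2 = ψ t ^ 2 := by
    intro t ht
    have hpt : 0 < -t := hpos t (hssub ht)
    simp only [hψdef]
    rw [mul_pow, ← Real.rpow_natCast ((-t) ^ e) 2, ← Real.rpow_mul hpt.le]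
    norm_num [mul_comm]
  have hψ2 : IntegrableOn (fun x => ψ x ^ 2) s :=
    (hw_int.mono_set hsI).congr_fun hψeq measurableSet_Ioo
  have hCS := cs_setIntegral hφm hψm hφ2 hψ2
  have hgeq : ∫ t in s, |g t| = ∫ t in s, |φ t| * |ψ t| := by
    apply setIntegral_congr_fun measurableSet_Ioo
    intro t ht
    have hpt : 0 < -t := hpos t (hssub ht)
    simp only [hφdef, hψdef, abs_mul, abs_of_pos (Real.rpow_pos_of_pos hpt (-e)),
      abs_of_pos (Real.rpow_pos_of_pos hpt e)]
    rw [← mul_assoc, ← Real.rpow_add hpt]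
    norm_num
  have hvol : (volume s).toReal = m/2 := by
    rw [hsdef, Real.volume_Ioo, ENNReal.toReal_ofReal (by linarith)]
    simp only [hmdef]; ring
  have hφbound : ∫ t in s, φ t ^ 2 ≤ 2 ^ (((2*N:ℕ)):ℝ) * m ^ (-(2*e)) * (m/2) := by
    have hconst : IntegrableOn (fun _ : ℝ => 2 ^ (((2*N:ℕ)):ℝ) * m ^ (-(2*e))) s := by
      exact integrableOn_const (by rw [hsdef, Real.volume_Ioo]; exact ENNReal.ofReal_ne_top)
    calc ∫ t in s, φ t ^ 2 ≤ ∫ _ in s, (2:ℝ) ^ (((2*N:ℕ)):ℝ) * m ^ (-(2*e)) := by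
          apply setIntegral_mono_on hφ2 hconst measurableSet_Ioo
          intro t ht
          have hpt := hposIcc t (hssub ht)
          have hpt0 : 0 < -t := hpos t (hssub ht)
          have heq2 : φ t ^ 2 = (-t) ^ (-(2*e)) := by
            simp only [hφdef]
            rw [← Real.rpow_natCast ((-t) ^ (-e)) 2, ← Real.rpow_mul hpt0.le]
            ring_nf
          rw [heq2]
          exact rpow_ratio_le hm hpt.1 hpt.2
            (by push_cast; rw [abs_neg, abs_mul, abs_two]; linarith)
      _ = 2 ^ (((2*N:ℕ)):ℝ) * m ^ (-(2*e)) * (m/2) := by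
          rw [setIntegral_const, measureReal_def, hvol, smul_eq_mul, mul_comm]
  have hsqrtφ : Real.sqrt (∫ t in s, φ t ^ 2) ≤ 2^N * m ^ ((1:ℝ)/2 - e) := by
    have hstep : m ^ (-(2*e)) * (m/2) ≤ m ^ (1 - 2*e) := by
      have h2 : m ^ (-(2*e)) * m = m ^ (1-2*e) := by
        nth_rewrite 2 [← Real.rpow_one m]
        rw [← Real.rpow_add hm]
        ring_nf
      nlinarith [Real.rpow_nonneg hm.le (-(2*e))]
    have h1 : ∫ t in s, φ t ^ 2 ≤ 2 ^ (((2*N:ℕ)):ℝ) * m ^ (1 - 2*e) := by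
      have h2N : (0:ℝ) < 2 ^ (((2*N:ℕ)):ℝ) := Real.rpow_pos_of_pos two_pos _
      calc ∫ t in s, φ t ^ 2 ≤ 2 ^ (((2*N:ℕ)):ℝ) * m ^ (-(2*e)) * (m/2) := hφbound
        _ = 2 ^ (((2*N:ℕ)):ℝ) * (m ^ (-(2*e)) * (m/2)) := by ring
        _ ≤ 2 ^ (((2*N:ℕ)):ℝ) * m ^ (1 - 2*e) := by nlinarith
    calc Real.sqrt (∫ t in s, φ t ^ 2)
        ≤ Real.sqrt (2 ^ (((2*N:ℕ)):ℝ) * m ^ (1 - 2*e)) := Real.sqrt_le_sqrt h1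
      _ = 2^N * m ^ ((1:ℝ)/2 - e) := by
          rw [Real.sqrt_mul (by positivity), Real.sqrt_eq_rpow, Real.sqrt_eq_rpow,
            ← Real.rpow_mul (by norm_num : (0:ℝ) ≤ 2), ← Real.rpow_mul hm.le]
          congr 1
          · rw [show (((2*N:ℕ)):ℝ) * ((1:ℝ)/2) = ((N:ℕ):ℝ) by push_cast; ring,
              Real.rpow_natCast]
          · congr 1; ring
  have hsqrtψ : Real.sqrt (∫ t in s, ψ t ^ 2) ≤
      Real.sqrt (∫ t in Ioo (-1:ℝ) 0, (-t) ^ (2*e) * g t ^ 2) := by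
    apply Real.sqrt_le_sqrt
    have heqs : ∫ t in s, ψ t ^ 2 = ∫ t in s, (-t) ^ (2*e) * g t ^ 2 :=
      (setIntegral_congr_fun (μ := volume) measurableSet_Ioo
        (fun t ht => (hψeq t ht))).symm
    rw [heqs]
    apply setIntegral_mono_set hw_int
    · filter_upwards [ae_restrict_mem measurableSet_Ioo] with t ht
      exact mul_nonneg (Real.rpow_nonneg (by linarith [ht.2]) _) (sq_nonneg _)
    · exact HasSubset.Subset.eventuallyLE hsI
  calc ∫ t in s, |g t| = ∫ t in s, |φ t| * |ψ t| := hgeq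
    _ ≤ Real.sqrt (∫ t in s, φ t ^ 2) * Real.sqrt (∫ t in s, ψ t ^ 2) := hCS
    _ ≤ (2^N * m ^ ((1:ℝ)/2 - e)) *
        Real.sqrt (∫ t in Ioo (-1:ℝ) 0, (-t) ^ (2*e) * g t ^ 2) :=
          mul_le_mul hsqrtφ hsqrtψ (Real.sqrt_nonneg _) (by positivity)
    _ = 2^N * m ^ ((1:ℝ)/2 - e) *
        Real.sqrt (∫ t in Ioo (-1:ℝ) 0, (-t) ^ (2*e) * g t ^ 2) := by ring

lemma l1_le_sqrt_l2 {g : ℝ → ℝ}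
    (hm : AEStronglyMeasurable g (volume.restrict (Ioo (-1:ℝ) 0)))
    (hg : IntegrableOn (fun x => g x ^ 2) (Ioo (-1:ℝ) 0)) :
    ∫ x in Ioo (-1:ℝ) 0, |g x| ≤ Real.sqrt (∫ x in Ioo (-1:ℝ) 0, g x ^ 2) := by
  have hone : IntegrableOn (fun _ : ℝ => (1:ℝ) ^ 2) (Ioo (-1:ℝ) 0) :=
    integrableOn_const (by rw [Real.volume_Ioo]; exact ENNReal.ofReal_ne_top)
  have hcs := cs_setIntegral hm (aestronglyMeasurable_const (b := (1:ℝ))) hg hone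
  have h1 : ∫ _ in Ioo (-1:ℝ) 0, ((1:ℝ))^2 = 1 := by
    rw [setIntegral_const, Real.volume_real_Ioo_of_le (by norm_num)]
    norm_num
  simpa [abs_one, mul_one, h1, Real.sqrt_one] using hcs

lemma sup_via_avg {g : ℝ → ℝ} {B b : ℝ}
    (hgi : IntegrableOn (fun x => |g x|) (Ioo (-1:ℝ) 0))
    (h : ∀ y ∈ Ioo (-1:ℝ) 0, b ≤ |g y| + B) :
    b ≤ (∫ x in Ioo (-1:ℝ) 0, |g x|) + B := by
  have h2 : ∫ _ in Ioo (-1:ℝ) 0, (b - B) ≤ ∫ x in Ioo (-1:ℝ) 0, |g x| := by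
    apply setIntegral_mono_on
      (integrableOn_const (by rw [Real.volume_Ioo]; exact ENNReal.ofReal_ne_top))
      hgi measurableSet_Ioo
    intro y hy
    linarith [h y hy]
  rw [setIntegral_const, Real.volume_real_Ioo_of_le (by norm_num)] at h2
  simp only [smul_eq_mul] at h2
  norm_num at h2
  linarith

/-- The weighted Sobolev norm `‖f‖_{H^γ_{N+1}}` of Definition 2.9, expressed in terms
of the chain of derivatives `D j` of `f = D 0` on the interval `[-1,0]`. -/
noncomputable def weightedSobolevNorm (γ : ℝ) (N : ℕ) (D : ℕ → ℝ → ℝ) : ℝ :=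
  Real.sqrt (∫ z in Ioo (-1 : ℝ) 0, (D 0 z) ^ 2) +
  Real.sqrt (∫ z in Ioo (-1 : ℝ) 0, (D 1 z) ^ 2) +
  ∑ j ∈ Finset.Icc 2 (N + 1),
    Real.sqrt (∫ z in Ioo (-1 : ℝ) 0, (-z) ^ (2 * ((j : ℝ) - 2 + γ)) * (D j z) ^ 2)

set_option maxHeartbeats 2000000 in
/-- Lemma 2.11 (quantitative form): for `γ ∈ (-1/2,1/2)`, `N ≥ 2`, `α ∈ (1, 3/2 - γ]`
there is `C > 0` such that every `f` (with derivative chain `D`, `f = D 0`) that is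
`(N+1)`-times continuously differentiable on `[-1,0)`, continuously differentiable on
`[-1,0]`, and whose weighted Sobolev integrals are finite, satisfies
`‖f‖_{𝒞^α_N} ≤ C ‖f‖_{H^γ_{N+1}}` (stated pointwise for each sup in the 𝒞-norm). -/
theorem sobolev_embedding_weighted (γ α : ℝ) (N : ℕ)
    (hγ : -1/2 < γ ∧ γ < 1/2) (hN : 2 ≤ N) (hα : 1 < α ∧ α ≤ 3/2 - γ) :
    ∃ C > 0, ∀ D : ℕ → ℝ → ℝ,
      (∀ j ≤ N, ∀ z ∈ Ico (-1 : ℝ) 0, HasDerivWithinAt (D j) (D (j + 1) z) (Ico (-1) 0) z) →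
      (∀ j ≤ N + 1, ContinuousOn (D j) (Ico (-1) 0)) →
      (∀ z ∈ Icc (-1 : ℝ) 0, HasDerivWithinAt (D 0) (D 1 z) (Icc (-1) 0) z) →
      ContinuousOn (D 1) (Icc (-1) 0) →
      IntegrableOn (fun z => (D 0 z) ^ 2) (Ioo (-1) 0) →
      IntegrableOn (fun z => (D 1 z) ^ 2) (Ioo (-1) 0) →
      (∀ j, 2 ≤ j → j ≤ N + 1 →
        IntegrableOn (fun z => (-z) ^ (2 * ((j : ℝ) - 2 + γ)) * (D j z) ^ 2) (Ioo (-1) 0)) →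
      (∀ z ∈ Icc (-1 : ℝ) 0, |D 0 z| ≤ C * weightedSobolevNorm γ N D) ∧
      (∀ z ∈ Icc (-1 : ℝ) 0, |D 1 z| ≤ C * weightedSobolevNorm γ N D) ∧
      (∀ j, 2 ≤ j → j ≤ N → ∀ z ∈ Ico (-1 : ℝ) 0,
        (-z) ^ ((j : ℝ) - α) * |D j z| ≤ C * weightedSobolevNorm γ N D) := by
  obtain ⟨hγ1, hγ2⟩ := hγ
  obtain ⟨hα1, hα2⟩ := hα
  set Kγ : ℝ := Real.sqrt (∫ t in Ioo (-1:ℝ) 0, (-t) ^ (-(2 * (((2:ℕ):ℝ) - 2 + γ)))) with hKdef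
  have hK0 : 0 ≤ Kγ := Real.sqrt_nonneg _
  have hCpos : (0:ℝ) < 2^(N+2) + 1 + Kγ := by positivity
  refine ⟨2^(N+2) + 1 + Kγ, hCpos, ?_⟩
  intro D hder hcont hd0 hc1 hint0 hint1 hintw
  set C : ℝ := 2^(N+2) + 1 + Kγ with hCdef
  set I : Set ℝ := Ioo (-1:ℝ) 0 with hIdef
  have hC1 : (1:ℝ) ≤ C := by
    have h1 : (1:ℝ) = 1^(N+2) := (one_pow _).symm
    have : (1:ℝ) ≤ 2^(N+2) := by
      rw [h1]
      exact pow_le_pow_left₀ (by norm_num) (by norm_num) _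
    simp only [hCdef]; linarith
  -- the norm and its components
  set F : ℕ → ℝ :=
    fun k => Real.sqrt (∫ z in Ioo (-1:ℝ) 0, (-z) ^ (2 * ((k:ℝ) - 2 + γ)) * (D k z)^2)
    with hFdef
  set A0 : ℝ := Real.sqrt (∫ z in Ioo (-1:ℝ) 0, (D 0 z)^2) with hA0def
  set A1 : ℝ := Real.sqrt (∫ z in Ioo (-1:ℝ) 0, (D 1 z)^2) with hA1def
  set Nrm : ℝ := weightedSobolevNorm γ N D with hNrmdef
  have hNrmEq : Nrm = A0 + A1 + ∑ j ∈ Finset.Icc 2 (N+1), F j := rfl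
  have hsum0 : (0:ℝ) ≤ ∑ j ∈ Finset.Icc 2 (N+1), F j :=
    Finset.sum_nonneg fun i _ => Real.sqrt_nonneg _
  have hA00 : 0 ≤ A0 := Real.sqrt_nonneg _
  have hA10 : 0 ≤ A1 := Real.sqrt_nonneg _
  have hNrm0 : 0 ≤ Nrm := by rw [hNrmEq]; linarith
  have hA0N : A0 ≤ Nrm := by rw [hNrmEq]; linarith
  have hA1N : A1 ≤ Nrm := by rw [hNrmEq]; linarith
  have hFle : ∀ j, 2 ≤ j → j ≤ N + 1 → F j ≤ Nrm := by
    intro j h2 h3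
    have h1 := Finset.single_le_sum (f := F) (fun i _ => Real.sqrt_nonneg _)
      (Finset.mem_Icc.mpr ⟨h2, h3⟩)
    rw [hNrmEq]; linarith
  -- continuity and measurability facts
  have hc0 : ContinuousOn (D 0) (Icc (-1:ℝ) 0) := fun z hz => (hd0 z hz).continuousWithinAt
  have haesm : ∀ j, j ≤ N + 1 → AEStronglyMeasurable (D j) (volume.restrict I) := by
    intro j hj
    exact ((hcont j hj).mono Ioo_subset_Ico_self).aestronglyMeasurable measurableSet_Ioo
  have hD0abs : IntegrableOn (fun x => |D 0 x|) I :=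
    ((hc0.abs).integrableOn_Icc).mono_set Ioo_subset_Icc_self
  have hD1abs : IntegrableOn (fun x => |D 1 x|) I :=
    ((hc1.abs).integrableOn_Icc).mono_set Ioo_subset_Icc_self
  have hIL1_0 : ∫ x in I, |D 0 x| ≤ A0 := l1_le_sqrt_l2 (haesm 0 (by omega)) hint0
  have hIL1_1 : ∫ x in I, |D 1 x| ≤ A1 := l1_le_sqrt_l2 (haesm 1 (by omega)) hint1
  refine ⟨?_, ?_, ?_⟩
  · -- goal 1 : sup of f
    intro z hz
    have key1 : ∀ u v : ℝ, u ∈ Icc (-1:ℝ) 0 → v ∈ Icc (-1:ℝ) 0 → u ≤ v →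
        |D 0 v - D 0 u| ≤ ∫ x in I, |D 1 x| := by
      intro u v hu hv huv
      apply abs_sub_le_setIntegral huv (hc0.mono (Icc_subset_Icc hu.1 hv.2))
      · intro x hx
        have hxo : x ∈ Ioo (-1:ℝ) 0 := ⟨lt_of_le_of_lt hu.1 hx.1, lt_of_lt_of_le hx.2 hv.2⟩
        have hx' : x ∈ Icc (-1:ℝ) 0 := ⟨hxo.1.le, hxo.2.le⟩
        exact (hd0 x hx').hasDerivAt
          (Filter.mem_of_superset (Ioo_mem_nhds hxo.1 hxo.2) Ioo_subset_Icc_self)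
      · exact ((hc1.mono (by rw [uIcc_of_le huv]; exact Icc_subset_Icc hu.1 hv.2))).intervalIntegrable
      · exact hD1abs
      · intro x hx
        exact ⟨lt_of_le_of_lt hu.1 hx.1, lt_of_lt_of_le hx.2 hv.2⟩
    have hsup : |D 0 z| ≤ (∫ x in I, |D 0 x|) + ∫ x in I, |D 1 x| := by
      apply sup_via_avg hD0abs
      intro y hy
      have hyc : y ∈ Icc (-1:ℝ) 0 := Ioo_subset_Icc_self hy
      have habs : |D 0 z| - |D 0 y| ≤ |D 0 z - D 0 y| := abs_sub_abs_le_abs_sub _ _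
      rcases le_total y z with h | h
      · linarith [key1 y z hyc hz h]
      · rw [abs_sub_comm] at habs
        linarith [key1 z y hz hyc h]
    have hzN : |D 0 z| ≤ Nrm := by linarith [hsup, hIL1_0, hIL1_1]
    calc |D 0 z| ≤ Nrm := hzN
      _ = 1 * Nrm := (one_mul _).symm
      _ ≤ C * Nrm := mul_le_mul_of_nonneg_right hC1 hNrm0
  · -- goal 2 : sup of f'
    intro z hz
    -- integrability of |D 2| on I
    have he2 : (-1:ℝ) < -(2 * (((2:ℕ):ℝ) - 2 + γ)) := by push_cast; linarith
    have hw2 : IntegrableOn (fun t => (-t) ^ (2 * (((2:ℕ):ℝ) - 2 + γ)) * (D 2 t)^2) I :=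
      hintw 2 le_rfl (by omega)
    have hD2abs : IntegrableOn (fun x => |D 2 x|) I := by
      apply Integrable.mono' ((integrableOn_neg_rpow he2).add hw2)
      · exact (by simpa [Real.norm_eq_abs] using (haesm 2 (by omega)).norm :
          AEStronglyMeasurable (fun x => |D 2 x|) (volume.restrict I))
      · filter_upwards [ae_restrict_mem measurableSet_Ioo] with t ht
        have hpt : (0:ℝ) < -t := by
          have ht' : t ∈ Ioo (-1:ℝ) 0 := ht
          linarith [ht'.2]
        have hb := abs_le_winv_add_wsq
          (w := (-t) ^ (2 * (((2:ℕ):ℝ) - 2 + γ))) (u := D 2 t)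
          (Real.rpow_pos_of_pos hpt _)
        have hinv : ((-t) ^ (2 * (((2:ℕ):ℝ) - 2 + γ)))⁻¹
            = (-t) ^ (-(2 * (((2:ℕ):ℝ) - 2 + γ))) := (Real.rpow_neg hpt.le _).symm
        rw [hinv] at hb
        simpa [Real.norm_eq_abs, abs_abs] using hb
    have hD2int : IntegrableOn (D 2) I := by
      apply Integrable.mono' hD2abs (haesm 2 (by omega))
      filter_upwards with t
      simp [Real.norm_eq_abs]
    -- FTC estimate
    have key2 : ∀ u v : ℝ, u ∈ Icc (-1:ℝ) 0 → v ∈ Icc (-1:ℝ) 0 → u ≤ v →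
        |D 1 v - D 1 u| ≤ ∫ x in I, |D 2 x| := by
      intro u v hu hv huv
      apply abs_sub_le_setIntegral huv (hc1.mono (Icc_subset_Icc hu.1 hv.2))
      · intro x hx
        have hxo : x ∈ Ioo (-1:ℝ) 0 := ⟨lt_of_le_of_lt hu.1 hx.1, lt_of_lt_of_le hx.2 hv.2⟩
        have hx' : x ∈ Ico (-1:ℝ) 0 := ⟨hxo.1.le, hxo.2⟩
        exact (hder 1 (by omega) x hx').hasDerivAt
          (Filter.mem_of_superset (Ioo_mem_nhds hxo.1 hxo.2) Ioo_subset_Ico_self)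
      · apply (intervalIntegrable_iff_integrableOn_Ioo_of_le huv).mpr
        apply hD2int.mono_set
        intro x hx
        exact ⟨lt_of_le_of_lt hu.1 hx.1, lt_of_lt_of_le hx.2 hv.2⟩
      · exact hD2abs
      · intro x hx
        exact ⟨lt_of_le_of_lt hu.1 hx.1, lt_of_lt_of_le hx.2 hv.2⟩
    have hsup : |D 1 z| ≤ (∫ x in I, |D 1 x|) + ∫ x in I, |D 2 x| := by
      apply sup_via_avg hD1abs
      intro y hy
      have hyc : y ∈ Icc (-1:ℝ) 0 := Ioo_subset_Icc_self hy
      have habs : |D 1 z| - |D 1 y| ≤ |D 1 z - D 1 y| := abs_sub_abs_le_abs_sub _ _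
      rcases le_total y z with h | h
      · linarith [key2 y z hyc hz h]
      · rw [abs_sub_comm] at habs
        linarith [key2 z y hz hyc h]
    -- weighted Cauchy-Schwarz for ∫ |D 2|
    have hpos : ∀ t ∈ I, (0:ℝ) < -t := by
      intro t ht
      have ht' : t ∈ Ioo (-1:ℝ) 0 := ht
      linarith [ht'.2]
    have hφm2 : AEStronglyMeasurable (fun t : ℝ => (-t) ^ (-(((2:ℕ):ℝ) - 2 + γ)))
        (volume.restrict I) :=
      ((continuousOn_id.neg).rpow_const
        (fun t ht => Or.inl (ne_of_gt (hpos t ht)))).aestronglyMeasurable measurableSet_Ioo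
    have hψm2 : AEStronglyMeasurable (fun t : ℝ => (-t) ^ ((((2:ℕ):ℝ) - 2 + γ)) * D 2 t)
        (volume.restrict I) :=
      (((continuousOn_id.neg).rpow_const
        (fun t ht => Or.inl (ne_of_gt (hpos t ht)))).mul
          ((hcont 2 (by omega)).mono Ioo_subset_Ico_self)).aestronglyMeasurable
        measurableSet_Ioo
    have hφ22 : IntegrableOn (fun t : ℝ => ((-t) ^ (-(((2:ℕ):ℝ) - 2 + γ)))^2) I := by
      apply (integrableOn_neg_rpow he2).congr_fun ?_ measurableSet_Ioo
      intro t ht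
      simp only []
      rw [← Real.rpow_natCast ((-t) ^ (-(((2:ℕ):ℝ) - 2 + γ))) 2,
        ← Real.rpow_mul (hpos t ht).le]
      congr 1
      push_cast
      ring
    have hψ22 : IntegrableOn (fun t : ℝ => ((-t) ^ ((((2:ℕ):ℝ) - 2 + γ)) * D 2 t)^2) I := by
      apply hw2.congr_fun ?_ measurableSet_Ioo
      intro t ht
      simp only []
      rw [mul_pow, ← Real.rpow_natCast ((-t) ^ ((((2:ℕ):ℝ) - 2 + γ))) 2,
        ← Real.rpow_mul (hpos t ht).le]
      norm_num [mul_comm]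
    have hcs2 := cs_setIntegral hφm2 hψm2 hφ22 hψ22
    have habs2eq : ∫ t in I, |D 2 t| =
        ∫ t in I, |(-t) ^ (-(((2:ℕ):ℝ) - 2 + γ))| * |(-t) ^ ((((2:ℕ):ℝ) - 2 + γ)) * D 2 t| := by
      apply setIntegral_congr_fun measurableSet_Ioo
      intro t ht
      have hpt := hpos t ht
      simp only [abs_mul, abs_of_pos (Real.rpow_pos_of_pos hpt _),
        abs_of_pos (Real.rpow_pos_of_pos hpt ((((2:ℕ):ℝ) - 2 + γ)))]
      rw [← mul_assoc, ← Real.rpow_add hpt]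
      norm_num
    have hsqφ2 : Real.sqrt (∫ t in I, ((-t) ^ (-(((2:ℕ):ℝ) - 2 + γ)))^2) = Kγ := by
      rw [hKdef]
      congr 1
      apply setIntegral_congr_fun measurableSet_Ioo
      intro t ht
      simp only []
      rw [← Real.rpow_natCast ((-t) ^ (-(((2:ℕ):ℝ) - 2 + γ))) 2,
        ← Real.rpow_mul (hpos t ht).le]
      congr 1
      push_cast
      ring
    have hsqψ2 : Real.sqrt (∫ t in I, ((-t) ^ ((((2:ℕ):ℝ) - 2 + γ)) * D 2 t)^2) = F 2 := by
      rw [hFdef]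
      congr 1
      apply setIntegral_congr_fun measurableSet_Ioo
      intro t ht
      simp only []
      rw [mul_pow, ← Real.rpow_natCast ((-t) ^ ((((2:ℕ):ℝ) - 2 + γ))) 2,
        ← Real.rpow_mul (hpos t ht).le]
      norm_num [mul_comm]
    have hD2L1 : ∫ t in I, |D 2 t| ≤ Kγ * F 2 := by
      rw [habs2eq]
      calc ∫ t in I, |(-t) ^ (-(((2:ℕ):ℝ) - 2 + γ))| * |(-t) ^ ((((2:ℕ):ℝ) - 2 + γ)) * D 2 t|
          ≤ Real.sqrt (∫ t in I, ((-t) ^ (-(((2:ℕ):ℝ) - 2 + γ)))^2) *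
            Real.sqrt (∫ t in I, ((-t) ^ ((((2:ℕ):ℝ) - 2 + γ)) * D 2 t)^2) := hcs2
        _ = Kγ * F 2 := by rw [hsqφ2, hsqψ2]
    have hF2N : F 2 ≤ Nrm := hFle 2 le_rfl (by omega)
    have hKF : Kγ * F 2 ≤ Kγ * Nrm := mul_le_mul_of_nonneg_left hF2N hK0
    have h2N2 : (0:ℝ) < 2^(N+2) := by positivity
    have hzN : |D 1 z| ≤ Nrm + Kγ * Nrm := by
      linarith [hsup, hIL1_1, hD2L1, hKF]
    have hCN : (1 + Kγ) * Nrm ≤ C * Nrm := by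
      apply mul_le_mul_of_nonneg_right ?_ hNrm0
      simp only [hCdef]
      linarith [h2N2]
    calc |D 1 z| ≤ Nrm + Kγ * Nrm := hzN
      _ = (1 + Kγ) * Nrm := by ring
      _ ≤ C * Nrm := hCN
  · -- goal 3 : interior weighted bounds
    intro j hj2 hjN z hz
    have hz1 : -1 ≤ z := hz.1
    have hz0 : z < 0 := hz.2
    have hA : (0:ℝ) < -z := by linarith
    have hA1 : -z ≤ 1 := by linarith
    have hzz : z < z/2 := by linarith
    have hIccsub : Icc z (z/2) ⊆ Ico (-1:ℝ) 0 := by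
      intro t ht
      exact ⟨le_trans hz1 ht.1, lt_of_le_of_lt ht.2 (by linarith)⟩
    have hcj : ContinuousOn (D j) (Icc z (z/2)) := (hcont j (by omega)).mono hIccsub
    have hcj1 : ContinuousOn (D (j+1)) (Icc z (z/2)) := (hcont (j+1) (by omega)).mono hIccsub
    obtain ⟨y, hy, hyavg⟩ := exists_le_avg hzz hcj
    have hjR : (2:ℝ) ≤ (j:ℝ) := by exact_mod_cast hj2
    have hjNR : (j:ℝ) ≤ (N:ℝ) := by exact_mod_cast hjN
    have hN2 : (2:ℝ) ≤ (N:ℝ) := by exact_mod_cast hN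
    have hej : |(j:ℝ) - 2 + γ| ≤ (N:ℝ) := by
      rw [abs_le]; constructor <;> linarith
    have hej1 : |((j+1:ℕ):ℝ) - 2 + γ| ≤ (N:ℝ) := by
      push_cast
      rw [abs_le]; constructor <;> linarith
    have hb1 := key_interval_bound (g := D j) (e := (j:ℝ) - 2 + γ) N hz1 hz0 hej hcj
      (hintw j hj2 (by omega))
    have hb2 := key_interval_bound (g := D (j+1)) (e := ((j+1:ℕ):ℝ) - 2 + γ) N hz1 hz0 hej1 hcj1
      (hintw (j+1) (by omega) (by omega))
    -- FTC step
    have hftc : |D j z - D j y| ≤ ∫ t in Ioo z (z/2), |D (j+1) t| := by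
      rw [abs_sub_comm]
      apply abs_sub_le_setIntegral hy.1 (hcj.mono (Icc_subset_Icc le_rfl hy.2))
      · intro x hx
        have hxIco : x ∈ Ico (-1:ℝ) 0 := hIccsub ⟨hx.1.le, le_trans hx.2.le hy.2⟩
        have hxo : x ∈ Ioo (-1:ℝ) 0 :=
          ⟨lt_of_le_of_lt hz1 hx.1, lt_trans (lt_of_lt_of_le hx.2 hy.2) (by linarith)⟩
        exact (hder j hjN x hxIco).hasDerivAt
          (Filter.mem_of_superset (Ioo_mem_nhds hxo.1 hxo.2) Ioo_subset_Ico_self)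
      · exact ((hcont (j+1) (by omega)).mono
          (by rw [uIcc_of_le hy.1]
              exact (Icc_subset_Icc le_rfl hy.2).trans hIccsub)).intervalIntegrable
      · exact ((hcj1.abs).integrableOn_Icc).mono_set Ioo_subset_Icc_self
      · intro x hx
        exact ⟨hx.1, lt_of_lt_of_le hx.2 hy.2⟩
    -- average point bound
    have hA2 : (0:ℝ) < -z/2 := by linarith
    have hyab : |D j y| ≤ 2 * (-z)⁻¹ *
        (2^N * (-z) ^ ((1:ℝ)/2 - ((j:ℝ) - 2 + γ)) * F j) := by
      have hvol : z/2 - z = -z/2 := by ring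
      rw [hvol] at hyavg
      have h1 : |D j y| * (-z/2) ≤ 2^N * (-z) ^ ((1:ℝ)/2 - ((j:ℝ) - 2 + γ)) * F j :=
        le_trans hyavg hb1
      have h2 := (le_div_iff₀ hA2).mpr h1
      calc |D j y| ≤ (2^N * (-z) ^ ((1:ℝ)/2 - ((j:ℝ) - 2 + γ)) * F j) / (-z/2) := h2
        _ = 2 * (-z)⁻¹ * (2^N * (-z) ^ ((1:ℝ)/2 - ((j:ℝ) - 2 + γ)) * F j) := by
            rw [div_eq_mul_inv, show (-z/2)⁻¹ = 2 * (-z)⁻¹ by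
              rw [div_eq_mul_inv, mul_inv, inv_inv]; ring]
            ring
    -- exponent identities
    have id1 : (-z) ^ ((1:ℝ)/2 - ((j:ℝ) - 2 + γ))
        = (-z) * (-z) ^ (-(1:ℝ)/2 - ((j:ℝ) - 2 + γ)) := by
      rw [show (1:ℝ)/2 - ((j:ℝ) - 2 + γ) = 1 + (-(1:ℝ)/2 - ((j:ℝ) - 2 + γ)) by ring,
        Real.rpow_add hA, Real.rpow_one]
    have id2 : (-z) ^ ((j:ℝ) - α) * (-z) ^ (-(1:ℝ)/2 - ((j:ℝ) - 2 + γ))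
        = (-z) ^ ((3:ℝ)/2 - γ - α) := by
      rw [← Real.rpow_add hA]
      congr 1
      ring
    have id3 : (-z) ^ ((j:ℝ) - α) * (-z) ^ ((1:ℝ)/2 - (((j+1:ℕ):ℝ) - 2 + γ))
        = (-z) ^ ((3:ℝ)/2 - γ - α) := by
      rw [← Real.rpow_add hA]
      congr 1
      push_cast
      ring
    have id4 : (-z) ^ ((3:ℝ)/2 - γ - α) ≤ 1 := Real.rpow_le_one hA.le hA1 (by linarith)
    have hq0 : (0:ℝ) ≤ (-z) ^ ((3:ℝ)/2 - γ - α) := Real.rpow_nonneg hA.le _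
    have hP0 : (0:ℝ) ≤ (-z) ^ ((j:ℝ) - α) := Real.rpow_nonneg hA.le _
    have hFj0 : 0 ≤ F j := Real.sqrt_nonneg _
    have hFj10 : 0 ≤ F (j+1) := Real.sqrt_nonneg _
    have hFjN : F j ≤ Nrm := hFle j hj2 (by omega)
    have hFj1N : F (j+1) ≤ Nrm := hFle (j+1) (by omega) (by omega)
    -- triangle inequality
    have htri : |D j z| ≤ 2 * (-z)⁻¹ * (2^N * (-z) ^ ((1:ℝ)/2 - ((j:ℝ) - 2 + γ)) * F j)
        + 2^N * (-z) ^ ((1:ℝ)/2 - (((j+1:ℕ):ℝ) - 2 + γ)) * F (j+1) := by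
      have h1 : |D j z| ≤ |D j y| + |D j z - D j y| := by
        have heq : D j z = D j y + (D j z - D j y) := by ring
        calc |D j z| = |D j y + (D j z - D j y)| := by rw [← heq]
          _ ≤ |D j y| + |D j z - D j y| := abs_add_le _ _
      have h2 : |D j z - D j y| ≤
          2^N * (-z) ^ ((1:ℝ)/2 - (((j+1:ℕ):ℝ) - 2 + γ)) * F (j+1) := le_trans hftc hb2
      exact le_trans h1 (add_le_add hyab h2)
    -- algebraic simplification
    have hTA : (-z) ^ ((j:ℝ) - α) *
        (2 * (-z)⁻¹ * (2^N * (-z) ^ ((1:ℝ)/2 - ((j:ℝ) - 2 + γ)) * F j))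
        = 2^(N+1) * (-z) ^ ((3:ℝ)/2 - γ - α) * F j := by
      rw [id1]
      have hz' : (-z)⁻¹ * (-z) = 1 := inv_mul_cancel₀ hA.ne'
      calc (-z) ^ ((j:ℝ) - α) *
          (2 * (-z)⁻¹ * (2^N * ((-z) * (-z) ^ (-(1:ℝ)/2 - ((j:ℝ) - 2 + γ))) * F j))
          = 2 * 2^N * ((-z)⁻¹ * (-z)) *
            ((-z) ^ ((j:ℝ) - α) * (-z) ^ (-(1:ℝ)/2 - ((j:ℝ) - 2 + γ))) * F j := by ring
        _ = 2^(N+1) * (-z) ^ ((3:ℝ)/2 - γ - α) * F j := by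
            rw [hz', id2, pow_succ]
            ring
    have hTB : (-z) ^ ((j:ℝ) - α) *
        (2^N * (-z) ^ ((1:ℝ)/2 - (((j+1:ℕ):ℝ) - 2 + γ)) * F (j+1))
        = 2^N * (-z) ^ ((3:ℝ)/2 - γ - α) * F (j+1) := by
      calc (-z) ^ ((j:ℝ) - α) *
          (2^N * (-z) ^ ((1:ℝ)/2 - (((j+1:ℕ):ℝ) - 2 + γ)) * F (j+1))
          = (2:ℝ)^N * ((-z) ^ ((j:ℝ) - α) *
            (-z) ^ ((1:ℝ)/2 - (((j+1:ℕ):ℝ) - 2 + γ))) * F (j+1) := by ring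
        _ = 2^N * (-z) ^ ((3:ℝ)/2 - γ - α) * F (j+1) := by rw [id3]
    calc (-z) ^ ((j:ℝ) - α) * |D j z|
        ≤ (-z) ^ ((j:ℝ) - α) *
          (2 * (-z)⁻¹ * (2^N * (-z) ^ ((1:ℝ)/2 - ((j:ℝ) - 2 + γ)) * F j)
            + 2^N * (-z) ^ ((1:ℝ)/2 - (((j+1:ℕ):ℝ) - 2 + γ)) * F (j+1)) :=
          mul_le_mul_of_nonneg_left htri hP0
      _ = 2^(N+1) * (-z) ^ ((3:ℝ)/2 - γ - α) * F j
          + 2^N * (-z) ^ ((3:ℝ)/2 - γ - α) * F (j+1) := by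
          rw [mul_add, hTA, hTB]
      _ ≤ 2^(N+1) * Nrm + 2^N * Nrm := by
          have hX : (-z) ^ ((3:ℝ)/2 - γ - α) * F j ≤ Nrm := by
            calc (-z) ^ ((3:ℝ)/2 - γ - α) * F j ≤ 1 * Nrm :=
                mul_le_mul id4 hFjN hFj0 zero_le_one
              _ = Nrm := one_mul _
          have hY : (-z) ^ ((3:ℝ)/2 - γ - α) * F (j+1) ≤ Nrm := by
            calc (-z) ^ ((3:ℝ)/2 - γ - α) * F (j+1) ≤ 1 * Nrm :=
                mul_le_mul id4 hFj1N hFj10 zero_le_one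
              _ = Nrm := one_mul _
          have h1 : (2:ℝ)^(N+1) * ((-z) ^ ((3:ℝ)/2 - γ - α) * F j) ≤ 2^(N+1) * Nrm :=
            mul_le_mul_of_nonneg_left hX (by positivity)
          have h2 : (2:ℝ)^N * ((-z) ^ ((3:ℝ)/2 - γ - α) * F (j+1)) ≤ 2^N * Nrm :=
            mul_le_mul_of_nonneg_left hY (by positivity)
          calc 2^(N+1) * (-z) ^ ((3:ℝ)/2 - γ - α) * F j
              + 2^N * (-z) ^ ((3:ℝ)/2 - γ - α) * F (j+1)
              = 2^(N+1) * ((-z) ^ ((3:ℝ)/2 - γ - α) * F j)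
                + 2^N * ((-z) ^ ((3:ℝ)/2 - γ - α) * F (j+1)) := by ring
            _ ≤ 2^(N+1) * Nrm + 2^N * Nrm := add_le_add h1 h2
      _ ≤ C * Nrm := by
          have h2N : (0:ℝ) ≤ 2^N := by positivity
          have key : (2:ℝ)^(N+1) + 2^N ≤ 2^(N+2) := by
            have e1 : (2:ℝ)^(N+1) = 2 * 2^N := by ring
            have e2 : (2:ℝ)^(N+2) = 4 * 2^N := by ring
            rw [e1, e2]
            linarith only [h2N]
          have hCge : (2:ℝ)^(N+2) ≤ C := by
            simp only [hCdef]
            linarith only [hK0]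
          calc 2^(N+1) * Nrm + 2^N * Nrm = (2^(N+1) + 2^N) * Nrm := by ring
            _ ≤ 2^(N+2) * Nrm := mul_le_mul_of_nonneg_right key hNrm0
            _ ≤ C * Nrm := mul_le_mul_of_nonneg_right hCge hNrm0
end

section
/- Let γ ∈ (-1/2, 1/2) and let j ≥ 2 be an integer. Then there exists a constant C > 0 such that: for every g : ℝ → ℝ continuously differentiable on [-1/2, 0) such that t ↦ (-t)^{2γ+2j-2} g'(t)² is integrable on (-1/2,0), and for every z ∈ (-1/2,0), one has (-z)^{γ+j-3/2} |g(z)| ≤ C ( |g(-1/2)| + ( ∫_{-1/2}^{0} (-t)^{2γ+2j-2} g'(t)² dt )^{1/2} ). -/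
open MeasureTheory Set

set_option maxHeartbeats 1000000

/-- Pointwise step in the proof of Lemma 2.11: for `γ ∈ (-1/2,1/2)` and an integer
`j ≥ 2` there is `C > 0` such that every `g` continuously differentiable on `[-1/2,0)`
with `(-t)^(2γ+2j-2) g'(t)²` integrable satisfies, for all `z ∈ (-1/2,0)`,
`(-z)^(γ+j-3/2) |g z| ≤ C (|g(-1/2)| + (∫ (-t)^(2γ+2j-2) g'²)^{1/2})`. -/
theorem pointwise_weighted_interpolation (γ : ℝ) (hγ : -1/2 < γ ∧ γ < 1/2)
    (j : ℕ) (hj : 2 ≤ j) :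
    ∃ C > 0, ∀ g g' : ℝ → ℝ,
      (∀ z ∈ Ico (-1/2 : ℝ) 0, HasDerivWithinAt g (g' z) (Ico (-1/2) 0) z) →
      ContinuousOn g' (Ico (-1/2) 0) →
      IntegrableOn (fun t => (-t) ^ (2 * γ + 2 * (j : ℝ) - 2) * (g' t) ^ 2)
        (Ioo (-1/2) 0) →
      ∀ z ∈ Ioo (-1/2 : ℝ) 0,
        (-z) ^ (γ + (j : ℝ) - 3/2) * |g z|
          ≤ C * (|g (-1/2)| +
              Real.sqrt (∫ t in Ioo (-1/2 : ℝ) 0,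
                (-t) ^ (2 * γ + 2 * (j : ℝ) - 2) * (g' t) ^ 2)) := by
  obtain ⟨hγ1, hγ2⟩ := hγ
  have hj2 : (2:ℝ) ≤ (j:ℝ) := by exact_mod_cast hj
  set α : ℝ := 2 * γ + 2 * (j : ℝ) - 2 with hαdef
  have hα1 : 1 < α := by simp only [hαdef]; linarith
  refine ⟨1 + 1 / Real.sqrt (α - 1), by positivity, ?_⟩
  intro g g' hg hg' hint z hz
  obtain ⟨hz1, hz2⟩ := hz
  have hz0 : 0 < -z := by linarith
  set I : ℝ := ∫ t in Ioo (-1/2:ℝ) 0, (-t) ^ α * (g' t) ^ 2 with hIdef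
  have hInn : 0 ≤ I := by
    apply setIntegral_nonneg measurableSet_Ioo
    intro t ht
    have : (0:ℝ) < -t := by linarith [ht.2]
    exact mul_nonneg (Real.rpow_nonneg this.le _) (sq_nonneg _)
  set a : ℝ := γ + (j:ℝ) - 1 with hadef
  have haα : α = 2 * a := by simp only [hαdef, hadef]; ring
  clear_value α a
  have hzle : (-1/2 : ℝ) ≤ z := hz1.le
  have hzIco : Icc (-1/2:ℝ) z ⊆ Ico (-1/2) 0 := fun x hx => ⟨hx.1, lt_of_le_of_lt hx.2 hz2⟩
  -- continuity of g on [-1/2, z]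
  have hcontg : ContinuousOn g (Icc (-1/2) z) := fun x hx =>
    ((hg x (hzIco hx)).continuousWithinAt).mono hzIco
  have hg'contIcc : ContinuousOn g' (Icc (-1/2) z) := hg'.mono hzIco
  have hintg' : IntervalIntegrable g' volume (-1/2) z := by
    apply ContinuousOn.intervalIntegrable
    rwa [uIcc_of_le hzle]
  -- FTC
  have hftc : ∫ t in (-1/2:ℝ)..z, g' t = g z - g (-1/2) := by
    apply intervalIntegral.integral_eq_sub_of_hasDeriv_right_of_le hzle hcontg ?_ hintg'
    intro x hx
    have hxmem : x ∈ Ico (-1/2:ℝ) 0 := ⟨hx.1.le, lt_trans hx.2 hz2⟩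
    have : HasDerivAt g (g' x) x :=
      (hg x hxmem).hasDerivAt (Ico_mem_nhds (by linarith [hx.1]) (lt_trans hx.2 hz2))
    exact this.hasDerivWithinAt
  set S : Set ℝ := Ioc (-1/2:ℝ) z with hSdef
  have hSm : MeasurableSet S := measurableSet_Ioc
  have hSsub : S ⊆ Icc (-1/2) z := Ioc_subset_Icc_self
  have hSneg : ∀ t ∈ S, 0 < -t := fun t ht => by
    have := ht.2; simp only [hSdef, mem_Ioc] at ht; linarith [ht.2]
  have hIccneg : ∀ t ∈ Icc (-1/2:ℝ) z, 0 < -t := fun t ht => by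
    have := ht.2; linarith
  -- the two Hölder factors
  set F : ℝ → ℝ := fun t => (-t) ^ a * |g' t| with hFdef
  set G : ℝ → ℝ := fun t => (-t) ^ (-a) with hGdef
  have hwcont : ∀ (p : ℝ), ContinuousOn (fun t : ℝ => (-t) ^ p) (Icc (-1/2:ℝ) z) := by
    intro p
    apply ContinuousOn.rpow_const (continuous_neg.continuousOn)
    intro x hx
    exact Or.inl (ne_of_gt (hIccneg x hx))
  have hFcont : ContinuousOn F (Icc (-1/2) z) := (hwcont a).mul hg'contIcc.abs
  have hGcont : ContinuousOn G (Icc (-1/2) z) := hwcont (-a)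
  -- Memℒp facts
  have hmem : ∀ (f : ℝ → ℝ), ContinuousOn f (Icc (-1/2:ℝ) z) →
      MemLp f (ENNReal.ofReal 2) (volume.restrict S) := by
    intro f hf
    have h2 : ENNReal.ofReal (2:ℝ) = 2 := by norm_num
    rw [h2]
    have hfa : AEStronglyMeasurable f (volume.restrict S) :=
      (hf.mono hSsub).aestronglyMeasurable hSm
    rw [memLp_two_iff_integrable_sq hfa]
    exact ((hf.pow 2).integrableOn_Icc).mono_set hSsub
  -- Hölder (Cauchy-Schwarz)
  have hconj : Real.HolderConjugate 2 2 := Real.HolderConjugate.two_two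
  have hCS : ∫ t in S, F t * G t ≤
      (∫ t in S, F t ^ (2:ℝ)) ^ (1/2:ℝ) * (∫ t in S, G t ^ (2:ℝ)) ^ (1/2:ℝ) := by
    apply MeasureTheory.integral_mul_le_Lp_mul_Lq_of_nonneg hconj
    · filter_upwards [ae_restrict_mem hSm] with x hx
      exact mul_nonneg (Real.rpow_nonneg (hSneg x hx).le _) (abs_nonneg _)
    · filter_upwards [ae_restrict_mem hSm] with x hx
      exact Real.rpow_nonneg (hSneg x hx).le _
    · exact hmem F hFcont
    · exact hmem G hGcont
  -- identify F*G with |g'| on S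
  have hFG : ∫ t in S, F t * G t = ∫ t in S, |g' t| := by
    apply setIntegral_congr_fun hSm
    intro t ht
    have h0 : (0:ℝ) < -t := hSneg t ht
    simp only [hFdef, hGdef]
    rw [mul_comm ((-t) ^ a) |g' t|, mul_assoc, ← Real.rpow_add h0]
    simp
  -- identify F^2 with the weight integrand on S
  have hF2 : ∀ t ∈ S, F t ^ (2:ℝ) = (-t) ^ α * (g' t) ^ 2 := by
    intro t ht
    have h0 : (0:ℝ) < -t := hSneg t ht
    simp only [hFdef]
    rw [Real.rpow_two, mul_pow, sq_abs, ← Real.rpow_natCast ((-t) ^ a) 2,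
      ← Real.rpow_mul h0.le]
    norm_num [haα, mul_comm]
  have hG2 : ∀ t ∈ S, G t ^ (2:ℝ) = (-t) ^ (-α) := by
    intro t ht
    have h0 : (0:ℝ) < -t := hSneg t ht
    simp only [hGdef]
    rw [Real.rpow_two, ← Real.rpow_natCast ((-t) ^ (-a)) 2, ← Real.rpow_mul h0.le]
    norm_num [haα]
    ring_nf
  -- bound ∫_S F^2 by I
  have hSsubIoo : S ⊆ Ioo (-1/2:ℝ) 0 := fun t ht => ⟨ht.1, lt_of_le_of_lt ht.2 hz2⟩
  have hF2I : ∫ t in S, F t ^ (2:ℝ) ≤ I := by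
    rw [setIntegral_congr_fun hSm hF2]
    apply setIntegral_mono_set hint
    · filter_upwards [ae_restrict_mem measurableSet_Ioo] with t ht
      have : (0:ℝ) < -t := by linarith [ht.2]
      exact mul_nonneg (Real.rpow_nonneg this.le _) (sq_nonneg _)
    · exact HasSubset.Subset.eventuallyLE hSsubIoo
  -- compute ∫_S G^2
  have hwint : IntervalIntegrable (fun t : ℝ => (-t) ^ (-α)) volume (-1/2) z := by
    apply ContinuousOn.intervalIntegrable
    rw [uIcc_of_le hzle]; exact hwcont (-α)
  have hG2val : ∫ t in S, G t ^ (2:ℝ)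
      = (-z) ^ (1-α) / (α-1) - (1/2:ℝ) ^ (1-α) / (α-1) := by
    rw [setIntegral_congr_fun hSm hG2]
    have := intervalIntegral.integral_of_le (f := fun t : ℝ => (-t) ^ (-α))
      (μ := volume) hzle
    rw [hSdef, ← this]
    have hderiv : ∀ x ∈ uIcc (-1/2:ℝ) z,
        HasDerivAt (fun t : ℝ => (-t) ^ (1-α) / (α-1)) ((-x) ^ (-α)) x := by
      intro x hx
      rw [uIcc_of_le hzle] at hx
      have h0 : (0:ℝ) < -x := hIccneg x hx
      have h1 : HasDerivAt (fun t : ℝ => -t) (-1) x := hasDerivAt_neg x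
      have h2 : HasDerivAt (fun y : ℝ => y ^ (1-α)) ((1-α) * (-x) ^ (1-α-1)) (-x) :=
        Real.hasDerivAt_rpow_const (Or.inl (ne_of_gt h0))
      have h3 := (h2.comp x h1).div_const (α-1)
      refine h3.congr_deriv ?_
      have he : (1:ℝ) - α - 1 = -α := by ring
      have hne : α - 1 ≠ 0 := by linarith
      rw [he]
      field_simp
      ring
    rw [intervalIntegral.integral_eq_sub_of_hasDerivAt hderiv hwint]
    norm_num
  have hG2bound : ∫ t in S, G t ^ (2:ℝ) ≤ (-z) ^ (1-α) / (α-1) := by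
    rw [hG2val]
    have : (0:ℝ) ≤ (1/2:ℝ) ^ (1-α) / (α-1) :=
      div_nonneg (Real.rpow_nonneg (by norm_num) _) (by linarith)
    linarith
  have hG2nn : 0 ≤ ∫ t in S, G t ^ (2:ℝ) := by
    apply setIntegral_nonneg hSm
    intro t ht
    rw [hG2 t ht]
    exact Real.rpow_nonneg (hSneg t ht).le _
  have hF2nn : 0 ≤ ∫ t in S, F t ^ (2:ℝ) := by
    apply setIntegral_nonneg hSm
    intro t ht
    rw [hF2 t ht]
    exact mul_nonneg (Real.rpow_nonneg (hSneg t ht).le _) (sq_nonneg _)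
  -- passage to sqrt
  have hCS' : ∫ t in S, |g' t| ≤ Real.sqrt I * Real.sqrt ((-z) ^ (1-α) / (α-1)) := by
    rw [← hFG]
    refine hCS.trans ?_
    rw [← Real.sqrt_eq_rpow, ← Real.sqrt_eq_rpow]
    exact mul_le_mul (Real.sqrt_le_sqrt hF2I) (Real.sqrt_le_sqrt hG2bound)
      (Real.sqrt_nonneg _) (Real.sqrt_nonneg _)
  -- bound |g z|
  have habs : |g z| ≤ |g (-1/2)| + ∫ t in S, |g' t| := by
    have h1 : g z = g (-1/2) + ∫ t in (-1/2:ℝ)..z, g' t := by rw [hftc]; ring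
    have h2 : |∫ t in (-1/2:ℝ)..z, g' t| ≤ ∫ t in S, |g' t| := by
      rw [hSdef, ← intervalIntegral.integral_of_le hzle]
      exact intervalIntegral.abs_integral_le_integral_abs hzle
    calc |g z| ≤ |g (-1/2)| + |∫ t in (-1/2:ℝ)..z, g' t| := by
          rw [h1]; exact abs_add_le _ _
      _ ≤ _ := by linarith
  -- final assembly
  set B : ℝ := γ + (j:ℝ) - 3/2 with hBdef
  have hB0 : 0 ≤ B := by simp only [hBdef]; linarith
  have hBα : B = (α - 1) / 2 := by simp only [hBdef, hαdef]; ring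
  have hzB1 : (-z) ^ B ≤ 1 :=
    Real.rpow_le_one hz0.le (by linarith) hB0
  have hzBnn : 0 ≤ (-z) ^ B := Real.rpow_nonneg hz0.le _
  have hkey : (-z) ^ B * Real.sqrt ((-z) ^ (1-α) / (α-1)) = 1 / Real.sqrt (α-1) := by
    rw [Real.sqrt_div (Real.rpow_nonneg hz0.le _), Real.sqrt_eq_rpow ((-z) ^ (1-α)),
      ← Real.rpow_mul hz0.le]
    rw [mul_div_assoc']
    congr 1
    rw [← Real.rpow_add hz0, show B + (1-α) * (1/2:ℝ) = 0 by rw [hBα]; ring, Real.rpow_zero]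
  have hterm : (-z) ^ B * |g z| ≤ |g (-1/2)| + (1 / Real.sqrt (α-1)) * Real.sqrt I := by
    have h1 : (-z) ^ B * |g z| ≤ (-z) ^ B * (|g (-1/2)| + ∫ t in S, |g' t|) :=
      mul_le_mul_of_nonneg_left habs hzBnn
    have h2 : (-z) ^ B * (|g (-1/2)| + ∫ t in S, |g' t|)
        ≤ (-z) ^ B * |g (-1/2)|
          + (-z) ^ B * (Real.sqrt I * Real.sqrt ((-z) ^ (1-α) / (α-1))) := by
      rw [mul_add]
      have := mul_le_mul_of_nonneg_left hCS' hzBnn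
      linarith
    have h3 : (-z) ^ B * |g (-1/2)| ≤ |g (-1/2)| := by
      nlinarith [abs_nonneg (g (-1/2))]
    have h4 : (-z) ^ B * (Real.sqrt I * Real.sqrt ((-z) ^ (1-α) / (α-1)))
        = (1 / Real.sqrt (α-1)) * Real.sqrt I := by
      rw [mul_comm (Real.sqrt I), ← mul_assoc, hkey]
    linarith
  have hsq : 0 ≤ Real.sqrt I := Real.sqrt_nonneg _
  have hc : 0 ≤ 1 / Real.sqrt (α-1) := by positivity
  nlinarith [abs_nonneg (g (-1/2)), mul_nonneg hc hsq, mul_nonneg hc (abs_nonneg (g (-1/2)))]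
end

section
/- Let α ∈ (1,2), δ ∈ (0,1), let N ≥ 2 be an integer, and let δ' ∈ (0, min(δ, 2-α)). Then there exists a constant C > 0 such that: for every f : ℝ → ℝ that is N-times continuously differentiable on [-1,0), continuously differentiable on [-1,0], and such that for every 2 ≤ j ≤ N the function z ↦ (-z)^{j-α} f^{(j)}(z) extends to a Hölder continuous function of exponent δ on [-1,0], there exist a unique real number c₀ and a unique function f₁ : [-1,0] → ℝ such that: (i) f(z) = c₀ (-z)^{α} + f₁(z) for all z ∈ [-1,0]; (ii) f₁ is N-times continuously differentiable on [-1,0), continuously differentiable on [-1,0], and sup_{z∈[-1,0)} (-z)^{j-α-δ'} |f₁^{(j)}(z)| < ∞ for each 2 ≤ j ≤ N; (iii) |c₀| + ‖f₁‖_{𝒞^{α+δ'}_N} ≤ C ‖f‖_{𝒞^{α,δ}_N}. -/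
open Set

/-- `g` is Hölder continuous with constant `K` and exponent `δ` on the set `s`. -/
def HolderWithOn (K δ : ℝ) (g : ℝ → ℝ) (s : Set ℝ) : Prop :=
  ∀ x ∈ s, ∀ y ∈ s, |g x - g y| ≤ K * |x - y| ^ δ

open Filter

/-- coefficient of the j-th derivative of `(-z)^α` -/
def ccoef (α : ℝ) (k : ℕ) : ℝ := (-1:ℝ)^k * ∏ i ∈ Finset.range k, (α - (i:ℝ))

lemma ccoef_zero (α : ℝ) : ccoef α 0 = 1 := by simp [ccoef]

lemma ccoef_succ (α : ℝ) (k : ℕ) : ccoef α (k+1) = ((k:ℝ) - α) * ccoef α k := by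
  simp only [ccoef, pow_succ, Finset.prod_range_succ]; ring

lemma ccoef_two (α : ℝ) : ccoef α 2 = α * (α - 1) := by
  simp [ccoef, Finset.prod_range_succ]

lemma hasDerivAt_neg_rpow {p : ℝ} (z : ℝ) (h : z ≠ 0 ∨ 1 ≤ p) :
    HasDerivAt (fun w : ℝ => (-w) ^ p) (-(p * (-z) ^ (p - 1))) z := by
  have h1 : HasDerivAt (fun x : ℝ => x ^ p) (p * (-z) ^ (p - 1)) (-z) :=
    Real.hasDerivAt_rpow_const (h.imp neg_ne_zero.mpr id)
  simpa [mul_comm, Function.comp_def] using h1.comp z (hasDerivAt_neg z)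

lemma continuousOn_neg_rpow (p : ℝ) : ContinuousOn (fun t : ℝ => (-t) ^ p) (Iio 0) := by
  intro t ht
  have h1 : ContinuousAt (fun x : ℝ => x ^ p) (-t) :=
    Real.continuousAt_rpow_const _ _ (Or.inl (by simpa using ne_of_gt (neg_pos.mpr ht)))
  exact (h1.comp continuous_neg.continuousAt).continuousWithinAt

lemma tendsto_neg_rpow {p : ℝ} (hp : 0 < p) :
    Filter.Tendsto (fun z : ℝ => (-z) ^ p) (nhdsWithin 0 (Iio 0)) (nhds 0) := by
  have h1 : ContinuousAt (fun x : ℝ => x ^ p) 0 :=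
    Real.continuousAt_rpow_const _ _ (Or.inr hp.le)
  have h2 : Filter.Tendsto (fun z : ℝ => -z) (nhdsWithin 0 (Iio 0)) (nhds 0) := by
    have := (continuous_neg.tendsto (0:ℝ)).mono_left (nhdsWithin_le_nhds (s := Iio (0:ℝ)))
    simpa using this
  have := (h1.tendsto.comp h2)
  simpa [Real.zero_rpow hp.ne', Function.comp_def] using this

lemma holder_tendsto {K δ : ℝ} {g : ℝ → ℝ} (hδ : 0 < δ)
    (h : HolderWithOn K δ g (Icc (-1:ℝ) 0)) :
    Filter.Tendsto g (nhdsWithin 0 (Iio 0)) (nhds (g 0)) := by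
  have hmem : Ioo (-1:ℝ) 0 ∈ nhdsWithin (0:ℝ) (Iio 0) :=
    Ioo_mem_nhdsLT_of_mem ⟨by norm_num, le_refl 0⟩
  have hb : ∀ᶠ z in nhdsWithin (0:ℝ) (Iio 0), ‖g z - g 0‖ ≤ K * |z| ^ δ := by
    filter_upwards [hmem] with z hz
    simpa using h z ⟨hz.1.le, hz.2.le⟩ 0 ⟨by norm_num, le_refl 0⟩
  have ht : Filter.Tendsto (fun z : ℝ => K * |z| ^ δ) (nhdsWithin 0 (Iio 0)) (nhds 0) := by
    have h1 : ContinuousAt (fun x : ℝ => x ^ δ) 0 :=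
      Real.continuousAt_rpow_const _ _ (Or.inr hδ.le)
    have h2 : Filter.Tendsto (fun z : ℝ => |z|) (nhdsWithin 0 (Iio 0)) (nhds 0) := by
      have := (continuous_abs.tendsto (0:ℝ)).mono_left (nhdsWithin_le_nhds (s := Iio (0:ℝ)))
      simpa using this
    have h3 := (h1.tendsto.comp h2)
    rw [Real.zero_rpow hδ.ne'] at h3
    simpa using h3.const_mul K
  have h4 := (squeeze_zero_norm' hb ht).add
    (tendsto_const_nhds (α := ℝ) (x := g 0) (f := nhdsWithin 0 (Iio 0)))
  simpa using h4

lemma contDiff_one_neg_rpow {α : ℝ} (hα : 1 < α) : ContDiff ℝ 1 (fun z : ℝ => (-z) ^ α) := by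
  rw [contDiff_one_iff_deriv]
  have hd : ∀ z : ℝ, HasDerivAt (fun w : ℝ => (-w) ^ α) (-(α * (-z) ^ (α - 1))) z :=
    fun z => hasDerivAt_neg_rpow z (Or.inr hα.le)
  refine ⟨fun z => (hd z).differentiableAt, ?_⟩
  have he : deriv (fun z : ℝ => (-z) ^ α) = fun z => -(α * (-z) ^ (α - 1)) :=
    funext fun z => (hd z).deriv
  rw [he]
  have hc : Continuous (fun z : ℝ => (-z) ^ (α - 1)) := by
    rw [continuous_iff_continuousAt]
    intro z
    exact (Real.continuousAt_rpow_const (-z) (α - 1) (Or.inr (by linarith))).comp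
      continuous_neg.continuousAt
  exact ((continuous_const.mul hc).neg)

lemma contDiffOn_neg_rpow (p : ℝ) (n : ℕ) :
    ContDiffOn ℝ n (fun z : ℝ => (-z) ^ p) (Iio (0:ℝ)) := by
  intro z hz
  have h1 : ContDiffAt ℝ n (fun x : ℝ => x ^ p) (-z) :=
    Real.contDiffAt_rpow_const_of_ne (by simpa using ne_of_gt (neg_pos.mpr hz))
  exact (h1.comp z (contDiff_neg.contDiffAt)).contDiffWithinAt

lemma invert_G {α : ℝ} {j : ℕ} {Gj F : ℝ → ℝ} (z : ℝ) (hz0 : (0:ℝ) < -z)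
    (h : Gj z = (-z) ^ ((j:ℝ) - α) * F z) : F z = (-z) ^ (α - (j:ℝ)) * Gj z := by
  rw [h, ← mul_assoc, ← Real.rpow_add hz0, show α - (j:ℝ) + ((j:ℝ) - α) = 0 from by ring,
    Real.rpow_zero, one_mul]

lemma iter_eq {n : ℕ} {s : Set ℝ} (hs : UniqueDiffOn ℝ s) (g : ℝ → ℝ) (Gk : ℕ → ℝ → ℝ)
    (h0 : ∀ z ∈ s, Gk 0 z = g z)
    (hstep : ∀ k, k < n → ∀ z ∈ s, HasDerivWithinAt (Gk k) (Gk (k+1) z) s z) :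
    ∀ z ∈ s, iteratedDerivWithin n g s z = Gk n z := by
  induction n with
  | zero => intro z hz; rw [iteratedDerivWithin_zero]; exact (h0 z hz).symm
  | succ m ih =>
    intro z hz
    have ihm := ih (fun k hk => hstep k (hk.trans m.lt_succ_self))
    rw [iteratedDerivWithin_succ]
    rw [derivWithin_congr (fun w hw => ihm w hw) (ihm z hz)]
    exact (hstep m m.lt_succ_self z hz).derivWithin (hs z hz)

lemma iterDeriv_sub_rpow {α : ℝ} {N j : ℕ} (hj : j ≤ N) {f : ℝ → ℝ}
    (hf : ContDiffOn ℝ N f (Ico (-1:ℝ) 0)) (c : ℝ) :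
    ∀ z ∈ Ico (-1:ℝ) 0,
      iteratedDerivWithin j (fun w => f w - c * (-w) ^ α) (Ico (-1:ℝ) 0) z
        = iteratedDerivWithin j f (Ico (-1:ℝ) 0) z
          - c * (ccoef α j * (-z) ^ (α - j)) := by
  set s : Set ℝ := Ico (-1:ℝ) 0 with hs
  have hus : UniqueDiffOn ℝ s := uniqueDiffOn_Ico _ _
  apply iter_eq hus _ (fun k z => iteratedDerivWithin k f s z - c * (ccoef α k * (-z) ^ (α - k)))
  · intro z hz
    simp [ccoef_zero, iteratedDerivWithin_zero]
  · intro k hk z hz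
    have hzne : z ≠ 0 := ne_of_lt hz.2
    have h1 : HasDerivWithinAt (iteratedDerivWithin k f s) (iteratedDerivWithin (k+1) f s z) s z := by
      have hd : DifferentiableOn ℝ (iteratedDerivWithin k f s) s :=
        hf.differentiableOn_iteratedDerivWithin (by exact_mod_cast (lt_of_lt_of_le hk hj)) hus
      have := (hd z hz).hasDerivWithinAt
      rwa [← iteratedDerivWithin_succ] at this
    have h2 : HasDerivAt (fun w : ℝ => (-w) ^ (α - k)) (-((α - k) * (-z) ^ (α - k - 1))) z :=
      hasDerivAt_neg_rpow z (Or.inl hzne)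
    have h3 : HasDerivWithinAt (fun w => c * (ccoef α k * (-w) ^ (α - k)))
        (c * (ccoef α (k+1) * (-z) ^ (α - (k+1:ℕ)))) s z := by
      have := ((h2.const_mul (ccoef α k)).const_mul c).hasDerivWithinAt (s := s)
      refine this.congr_deriv (Eq.symm ?_)
      rw [ccoef_succ]
      have e2 : (α - ((k:ℝ)+1)) = α - k - 1 := by ring
      push_cast
      rw [e2]
      ring
    exact h1.sub h3

lemma hasDerivAt_iter {N m : ℕ} {f : ℝ → ℝ} (hf : ContDiffOn ℝ N f (Ico (-1:ℝ) 0)) (hmN : m < N) :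
    ∀ t ∈ Ioo (-1:ℝ) 0, HasDerivAt (iteratedDerivWithin m f (Ico (-1:ℝ) 0))
      (iteratedDerivWithin (m+1) f (Ico (-1:ℝ) 0) t) t := by
  intro t ht
  set s : Set ℝ := Ico (-1:ℝ) 0
  have hus : UniqueDiffOn ℝ s := uniqueDiffOn_Ico _ _
  have hts : t ∈ s := ⟨ht.1.le, ht.2⟩
  have hd : DifferentiableOn ℝ (iteratedDerivWithin m f s) s :=
    hf.differentiableOn_iteratedDerivWithin (by exact_mod_cast hmN) hus
  have h2 : HasDerivWithinAt (iteratedDerivWithin m f s)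
      (iteratedDerivWithin (m+1) f s t) s t := by
    have := (hd t hts).hasDerivWithinAt
    rwa [show derivWithin (iteratedDerivWithin m f s) s t = iteratedDerivWithin (m+1) f s t from
      (congrFun iteratedDerivWithin_succ t).symm] at this
  exact h2.hasDerivAt (Filter.mem_of_superset (isOpen_Ioo.mem_nhds ht) (fun w hw => ⟨hw.1.le, hw.2⟩))
lemma key_limit {α δ δ' : ℝ} {N m : ℕ} {f : ℝ → ℝ} {G : ℕ → ℝ → ℝ}
    (hα1 : 1 < α) (hδpos : 0 < δ) (hδ'pos : 0 < δ') (hδ'δ : δ' < δ) (hδ'α : δ' < 2 - α)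
    (hm : 2 ≤ m) (hmN : m + 1 ≤ N)
    (hf : ContDiffOn ℝ N f (Ico (-1:ℝ) 0))
    (hGm : ∀ z ∈ Ico (-1:ℝ) 0, G m z = (-z) ^ ((m:ℝ) - α) * iteratedDerivWithin m f (Ico (-1:ℝ) 0) z)
    (hGmH : ∃ K, HolderWithOn K δ (G m) (Icc (-1:ℝ) 0))
    (hG1 : ∀ z ∈ Ico (-1:ℝ) 0,
      G (m+1) z = (-z) ^ (((m+1:ℕ):ℝ) - α) * iteratedDerivWithin (m+1) f (Ico (-1:ℝ) 0) z)
    (hG1H : ∃ K, HolderWithOn K δ (G (m+1)) (Icc (-1:ℝ) 0)) :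
    G (m+1) 0 = ((m:ℝ) - α) * G m 0 := by
  obtain ⟨K, hK⟩ := hG1H
  set s : Set ℝ := Ico (-1:ℝ) 0 with hsdef
  set L : ℝ := G (m+1) 0 with hLdef
  set μ : ℝ := (m:ℝ) - α with hμdef
  have hα0 : 0 < α := lt_trans one_pos hα1
  have hμpos : 0 < μ := by
    have : α < 2 := by linarith
    have h2m : (2:ℝ) ≤ (m:ℝ) := by exact_mod_cast hm
    simp only [hμdef]; linarith
  have hμδ : 0 < μ - δ' := by
    have h2m : (2:ℝ) ≤ (m:ℝ) := by exact_mod_cast hm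
    simp only [hμdef]; linarith
  have hKnn : 0 ≤ K := by
    have h1 := hK (-(1/2)) ⟨by norm_num, by norm_num⟩ 0 ⟨by norm_num, le_refl 0⟩
    have h2 : (0:ℝ) < |(-(1/2):ℝ) - 0| ^ δ := Real.rpow_pos_of_pos (by norm_num) _
    nlinarith [abs_nonneg (G (m+1) (-(1/2)) - G (m+1) 0)]
  set fj1 := iteratedDerivWithin m f s with hfj1
  set fj := iteratedDerivWithin (m+1) f s with hfj
  set ψ : ℝ → ℝ := fun z => fj1 z - (L/μ) * (-z) ^ (α - m) with hψdef
  set g : ℝ → ℝ := fun z => fj z - L * (-z) ^ (α - m - 1) with hgdef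
  set B : ℝ → ℝ := fun z => (K/(μ - δ')) * (-z) ^ (α - m + δ') with hBdef
  have hgt0 : ∀ t ∈ Ioo (-1:ℝ) 0, (0:ℝ) < -t := fun t ht => neg_pos.mpr ht.2
  -- ψ has derivative g on Ioo (-1) 0
  have hψd : ∀ t ∈ Ioo (-1:ℝ) 0, HasDerivAt ψ (g t) t := by
    intro t ht
    have h1 := hasDerivAt_iter hf (show m < N by omega) t ht
    have h2 := (hasDerivAt_neg_rpow (p := α - m) t (Or.inl (ne_of_lt ht.2))).const_mul (L/μ)
    have h3 := h1.sub h2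
    refine h3.congr_deriv (Eq.symm ?_)
    show fj t - L * (-t) ^ (α - m - 1) = fj t - L / μ * -((α - ↑m) * (-t) ^ (α - ↑m - 1))
    have hne : ((m:ℝ) - α) ≠ 0 := by rw [← hμdef]; exact hμpos.ne'
    rw [hμdef]
    field_simp
    ring
  -- B has derivative K * (-t)^(α - m - 1 + δ') on Ioo (-1) 0
  have hBd : ∀ t ∈ Ioo (-1:ℝ) 0, HasDerivAt B (K * (-t) ^ (α - m - 1 + δ')) t := by
    intro t ht
    have h2 := (hasDerivAt_neg_rpow (p := α - m + δ') t (Or.inl (ne_of_lt ht.2))).const_mul (K/(μ - δ'))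
    refine h2.congr_deriv (Eq.symm ?_)
    have hne : ((m:ℝ) - α - δ') ≠ 0 := by
      have : μ - δ' = (m:ℝ) - α - δ' := by rw [hμdef]
      rw [← this]; exact hμδ.ne'
    have e : α - (m:ℝ) + δ' - 1 = α - m - 1 + δ' := by ring
    rw [hμdef, ← e]
    field_simp
    ring
  set a : ℝ := -(1/2) with hadef
  have hIooSub : Ioo a (0:ℝ) ⊆ Ioo (-1:ℝ) 0 := fun t ht =>
    ⟨lt_trans (by norm_num [hadef]) ht.1, ht.2⟩
  have hmain : ∀ z ∈ Ioo a (0:ℝ), |ψ z - ψ a| ≤ B z := by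
    intro z hz
    have haz : a ≤ z := hz.1.le
    have hsub : uIcc a z ⊆ Ioo (-1:ℝ) 0 := by
      rw [uIcc_of_le haz]
      intro t ht
      exact ⟨lt_of_lt_of_le (by norm_num [hadef]) ht.1, lt_of_le_of_lt ht.2 hz.2⟩
    have hsubIio : uIcc a z ⊆ Iio (0:ℝ) := fun t ht => (hsub ht).2
    have hgcont : ContinuousOn g (uIcc a z) := by
      have h1 : ContinuousOn fj (uIcc a z) :=
        (hf.continuousOn_iteratedDerivWithin (by exact_mod_cast hmN) (uniqueDiffOn_Ico _ _)).mono
          ((hsub.trans (fun t ht => ⟨ht.1.le, ht.2⟩)))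
      exact h1.sub (continuousOn_const.mul ((continuousOn_neg_rpow _).mono hsubIio))
    have hgint : IntervalIntegrable g MeasureTheory.volume a z := hgcont.intervalIntegrable
    have hftc : ∫ t in a..z, g t = ψ z - ψ a :=
      intervalIntegral.integral_eq_sub_of_hasDerivAt (fun x hx => hψd x (hsub hx)) hgint
    have hBcont : ContinuousOn (fun t => K * (-t) ^ (α - ↑m - 1 + δ')) (uIcc a z) :=
      continuousOn_const.mul ((continuousOn_neg_rpow _).mono hsubIio)
    have hBint := hBcont.intervalIntegrable (μ := MeasureTheory.volume)
    have hftcB : ∫ t in a..z, K * (-t) ^ (α - ↑m - 1 + δ') = B z - B a :=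
      intervalIntegral.integral_eq_sub_of_hasDerivAt (fun x hx => hBd x (hsub hx)) hBint
    have hptw : ∀ t ∈ Icc a z, |g t| ≤ K * (-t) ^ (α - ↑m - 1 + δ') := by
      intro t ht
      have ht' : t ∈ Ioo (-1:ℝ) 0 := hsub (by rwa [uIcc_of_le haz])
      have ht0 : (0:ℝ) < -t := neg_pos.mpr ht'.2
      have htle : -t ≤ 1 := by
        have := ht.1
        simp only [hadef] at this
        linarith
      have htm : t ∈ s := ⟨ht'.1.le, ht'.2⟩
      have e0 : α - ((m+1:ℕ):ℝ) = α - (m:ℝ) - 1 := by push_cast; ring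
      have hfjt : fj t = (-t) ^ (α - (m:ℝ) - 1) * G (m+1) t := by
        have h1 := hG1 t htm
        have h2 : (-t) ^ (α - ((m+1:ℕ):ℝ)) * ((-t) ^ (((m+1:ℕ):ℝ) - α)) = 1 := by
          rw [← Real.rpow_add ht0, show α - ((m+1:ℕ):ℝ) + (((m+1:ℕ):ℝ) - α) = 0 from by ring,
            Real.rpow_zero]
        rw [h1, ← mul_assoc, ← e0, h2, one_mul]
      have hgt : g t = (-t) ^ (α - (m:ℝ) - 1) * (G (m+1) t - L) := by
        show fj t - L * (-t) ^ (α - (m:ℝ) - 1) = _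
        rw [hfjt]; ring
      have hXnn : (0:ℝ) ≤ (-t) ^ (α - (m:ℝ) - 1) := Real.rpow_nonneg ht0.le _
      have hh := hK t ⟨ht'.1.le, ht'.2.le⟩ 0 ⟨by norm_num, le_refl 0⟩
      have habs : |t - 0| = -t := by rw [sub_zero, abs_of_neg ht'.2]
      have hexp : (-t) ^ δ ≤ (-t) ^ δ' :=
        Real.rpow_le_rpow_of_exponent_ge ht0 htle hδ'δ.le
      have hGL : |G (m+1) t - L| ≤ K * (-t) ^ δ' := by
        rw [habs] at hh
        calc |G (m+1) t - L| ≤ K * (-t) ^ δ := hh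
          _ ≤ K * (-t) ^ δ' := mul_le_mul_of_nonneg_left hexp hKnn
      calc |g t| = (-t) ^ (α - (m:ℝ) - 1) * |G (m+1) t - L| := by
            rw [hgt, abs_mul, abs_of_nonneg hXnn]
        _ ≤ (-t) ^ (α - (m:ℝ) - 1) * (K * (-t) ^ δ') :=
            mul_le_mul_of_nonneg_left hGL hXnn
        _ = K * (-t) ^ (α - ↑m - 1 + δ') := by
            rw [Real.rpow_add ht0]; ring
    have hBa : (0:ℝ) ≤ B a := by
      have : (0:ℝ) ≤ -a := by norm_num [hadef]
      exact mul_nonneg (div_nonneg hKnn hμδ.le) (Real.rpow_nonneg this _)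
    calc |ψ z - ψ a| = |∫ t in a..z, g t| := by rw [hftc]
      _ ≤ ∫ t in a..z, |g t| := intervalIntegral.abs_integral_le_integral_abs haz
      _ ≤ ∫ t in a..z, K * (-t) ^ (α - ↑m - 1 + δ') :=
          intervalIntegral.integral_mono_on haz hgint.abs hBint hptw
      _ = B z - B a := hftcB
      _ ≤ B z := by linarith
  -- limits along 𝓝[<] 0
  have hmem : Ioo a (0:ℝ) ∈ nhdsWithin (0:ℝ) (Iio 0) :=
    Ioo_mem_nhdsLT_of_mem ⟨by norm_num [hadef], le_refl 0⟩
  obtain ⟨K', hK'⟩ := hGmH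
  have T1 : Tendsto (fun z => (-z) ^ μ * fj1 z) (nhdsWithin (0:ℝ) (Iio 0)) (nhds (G m 0)) := by
    apply (holder_tendsto hδpos hK').congr'
    filter_upwards [hmem] with z hz
    exact hGm z ⟨(hIooSub hz).1.le, hz.2⟩
  have TB : Tendsto (fun z => (-z) ^ μ * (ψ z - ψ a)) (nhdsWithin (0:ℝ) (Iio 0)) (nhds 0) := by
    apply squeeze_zero_norm' (a := fun z => (K/(μ - δ')) * (-z) ^ δ')
    · filter_upwards [hmem] with z hz
      have hz0 : (0:ℝ) < -z := neg_pos.mpr hz.2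
      have hXnn : (0:ℝ) ≤ (-z) ^ μ := Real.rpow_nonneg hz0.le _
      have h1 : ‖(-z) ^ μ * (ψ z - ψ a)‖ = (-z) ^ μ * |ψ z - ψ a| := by
        rw [Real.norm_eq_abs, abs_mul, abs_of_nonneg hXnn]
      rw [h1]
      calc (-z) ^ μ * |ψ z - ψ a| ≤ (-z) ^ μ * B z :=
            mul_le_mul_of_nonneg_left (hmain z hz) hXnn
        _ = (K/(μ - δ')) * (-z) ^ δ' := by
            show (-z) ^ μ * ((K/(μ - δ')) * (-z) ^ (α - ↑m + δ')) = _
            rw [mul_comm ((-z) ^ μ), mul_assoc, ← Real.rpow_add hz0, hμdef,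
              show α - ↑m + δ' + ((m:ℝ) - α) = δ' from by ring]
    · have := (tendsto_neg_rpow hδ'pos).const_mul (K/(μ - δ'))
      simpa using this
  have Ta : Tendsto (fun z => (-z) ^ μ * ψ a) (nhdsWithin (0:ℝ) (Iio 0)) (nhds 0) := by
    have := (tendsto_neg_rpow hμpos).mul_const (ψ a)
    simpa using this
  have Tψ : Tendsto (fun z => (-z) ^ μ * ψ z) (nhdsWithin (0:ℝ) (Iio 0)) (nhds 0) := by
    have h := TB.add Ta
    rw [add_zero] at h
    exact h.congr (fun z => by ring)
  have T2 : Tendsto (fun z => (-z) ^ μ * fj1 z) (nhdsWithin (0:ℝ) (Iio 0)) (nhds (0 + L/μ)) := by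
    apply Tendsto.congr' _ (Tψ.add tendsto_const_nhds)
    filter_upwards [hmem] with z hz
    have hz0 : (0:ℝ) < -z := neg_pos.mpr hz.2
    have h2 : (-z) ^ μ * (-z) ^ (α - ↑m) = 1 := by
      rw [← Real.rpow_add hz0, hμdef, show (m:ℝ) - α + (α - ↑m) = 0 from by ring,
        Real.rpow_zero]
    show (-z) ^ μ * ψ z + L/μ = (-z) ^ μ * fj1 z
    have h3 : (-z) ^ μ * ψ z = (-z) ^ μ * fj1 z - L/μ * ((-z) ^ μ * (-z) ^ (α - ↑m)) := by
      show (-z) ^ μ * (fj1 z - L/μ * (-z) ^ (α - ↑m)) = _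
      ring
    rw [h3, h2]
    ring
  have huniq : G m 0 = 0 + L/μ := tendsto_nhds_unique T1 T2
  rw [zero_add] at huniq
  rw [huniq]
  field_simp

/-- Lemma 2.10 (decomposition lemma for the localized Hölder space `𝒞^{α,δ}_N` on
`[-1,0]`): for `α ∈ (1,2)`, `δ ∈ (0,1)`, `N ≥ 2`, `δ' ∈ (0, min(δ, 2-α))` there is
`C > 0` such that each `f` in `𝒞^{α,δ}_N` (encoded by the hypotheses, `G j` being the
Hölder-continuous extension of `(-z)^(j-α) f⁽ʲ⁾`) admits a unique constant `c₀` for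
which the remainder `f₁ = f - c₀ (-z)^α` lies in `𝒞^{α+δ'}_N`, together with the bound
`|c₀| + ‖f₁‖_{𝒞^{α+δ'}_N} ≤ C ‖f‖_{𝒞^{α,δ}_N}` (stated via an arbitrary bound `M` on
the pieces of `‖f‖_{𝒞^{α,δ}_N}`). -/
theorem holder_space_decomposition (α δ δ' : ℝ) (N : ℕ)
    (hα : 1 < α ∧ α < 2) (hδ : 0 < δ ∧ δ < 1) (hN : 2 ≤ N)
    (hδ'pos : 0 < δ') (hδ'lt : δ' < min δ (2 - α)) :
    ∃ C > 0, ∀ f : ℝ → ℝ, ∀ G : ℕ → ℝ → ℝ,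
      ContDiffOn ℝ N f (Ico (-1) 0) →
      ContDiffOn ℝ 1 f (Icc (-1) 0) →
      (∀ j, 2 ≤ j → j ≤ N →
        (∀ z ∈ Ico (-1 : ℝ) 0,
          G j z = (-z) ^ ((j : ℝ) - α) * iteratedDerivWithin j f (Ico (-1) 0) z) ∧
        ∃ K, HolderWithOn K δ (G j) (Icc (-1) 0)) →
      ∃! c₀ : ℝ,
        ContDiffOn ℝ N (fun z => f z - c₀ * (-z) ^ α) (Ico (-1) 0) ∧
        ContDiffOn ℝ 1 (fun z => f z - c₀ * (-z) ^ α) (Icc (-1) 0) ∧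
        (∀ j, 2 ≤ j → j ≤ N → ∃ M : ℝ, ∀ z ∈ Ico (-1 : ℝ) 0,
          (-z) ^ ((j : ℝ) - α - δ') *
            |iteratedDerivWithin j (fun w => f w - c₀ * (-w) ^ α) (Ico (-1) 0) z| ≤ M) ∧
        (∀ M : ℝ,
          (∀ x ∈ Icc (-1 : ℝ) 0, |f x| ≤ M) →
          HolderWithOn M δ f (Icc (-1) 0) →
          (∀ x ∈ Icc (-1 : ℝ) 0, |derivWithin f (Icc (-1) 0) x| ≤ M) →
          HolderWithOn M δ (derivWithin f (Icc (-1) 0)) (Icc (-1) 0) →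
          (∀ j, 2 ≤ j → j ≤ N → ∀ x ∈ Icc (-1 : ℝ) 0, |G j x| ≤ M) →
          (∀ j, 2 ≤ j → j ≤ N → HolderWithOn M δ (G j) (Icc (-1) 0)) →
          |c₀| ≤ C * M ∧
          (∀ z ∈ Icc (-1 : ℝ) 0, |f z - c₀ * (-z) ^ α| ≤ C * M) ∧
          (∀ z ∈ Icc (-1 : ℝ) 0,
            |derivWithin (fun w => f w - c₀ * (-w) ^ α) (Icc (-1) 0) z| ≤ C * M) ∧
          (∀ j, 2 ≤ j → j ≤ N → ∀ z ∈ Ico (-1 : ℝ) 0,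
            (-z) ^ ((j : ℝ) - α - δ') *
              |iteratedDerivWithin j (fun w => f w - c₀ * (-w) ^ α) (Ico (-1) 0) z|
              ≤ C * M)) := by
  obtain ⟨hα1, hα2⟩ := hα
  obtain ⟨hδpos, hδ1⟩ := hδ
  have hδ'δ : δ' < δ := lt_of_lt_of_le hδ'lt (min_le_left _ _)
  have hδ'α : δ' < 2 - α := lt_of_lt_of_le hδ'lt (min_le_right _ _)
  have hα0 : (0:ℝ) < α := by linarith
  have hα1' : (0:ℝ) < α - 1 := by linarith
  have hαα : (0:ℝ) < α * (α - 1) := by nlinarith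
  have hd1 : (0:ℝ) < 1/(α-1) := one_div_pos.mpr hα1'
  have hd2 : (0:ℝ) < 1/(α*(α-1)) := one_div_pos.mpr hαα
  set C : ℝ := 1 + 1/(α-1) + 1/(α*(α-1)) + 1 with hC
  have hCpos : 0 < C := by rw [hC]; linarith
  refine ⟨C, hCpos, ?_⟩
  intro f G hfN hf1 hG
  have hus : UniqueDiffOn ℝ (Ico (-1:ℝ) 0) := uniqueDiffOn_Ico _ _
  have huI : UniqueDiffOn ℝ (Icc (-1:ℝ) 0) := uniqueDiffOn_Icc (by norm_num)
  set c₀ : ℝ := G 2 0 / (α * (α-1)) with hc₀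
  -- identification of the boundary values G j 0
  have hGj0 : ∀ j, 2 ≤ j → j ≤ N → G j 0 = c₀ * ccoef α j := by
    intro j hj2
    induction j, hj2 using Nat.le_induction with
    | base =>
      intro _
      rw [ccoef_two, hc₀]
      field_simp
    | succ m hm ih =>
      intro hmN
      have hmN' : m ≤ N := by omega
      have h1 := key_limit hα1 hδpos hδ'pos hδ'δ hδ'α hm hmN hfN
        (hG m hm hmN').1 (hG m hm hmN').2 (hG (m+1) (by omega) hmN).1 (hG (m+1) (by omega) hmN).2
      rw [h1, ih hmN', ccoef_succ]
      ring
  -- the weighted bound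
  have hbound : ∀ (j : ℕ), 2 ≤ j → j ≤ N → ∀ K : ℝ, HolderWithOn K δ (G j) (Icc (-1:ℝ) 0) →
      ∀ z ∈ Ico (-1:ℝ) 0,
        (-z) ^ ((j:ℝ) - α - δ') *
          |iteratedDerivWithin j (fun w => f w - c₀ * (-w) ^ α) (Ico (-1:ℝ) 0) z| ≤ |K| := by
    intro j hj2 hjN K hK z hz
    have hz0 : (0:ℝ) < -z := neg_pos.mpr hz.2
    have hz1 : -z ≤ 1 := by have := hz.1; linarith
    have hiter := iterDeriv_sub_rpow (α := α) hjN hfN c₀ z hz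
    have hfj := invert_G z hz0 ((hG j hj2 hjN).1 z hz)
    have hG0 := hGj0 j hj2 hjN
    have he : iteratedDerivWithin j (fun w => f w - c₀ * (-w) ^ α) (Ico (-1:ℝ) 0) z
        = (-z) ^ (α - (j:ℝ)) * (G j z - G j 0) := by
      rw [hiter, hfj, hG0]; ring
    rw [he]
    have h2 := hK z ⟨hz.1, hz.2.le⟩ 0 ⟨by norm_num, le_refl 0⟩
    rw [sub_zero, abs_of_neg hz.2] at h2
    calc (-z) ^ ((j:ℝ) - α - δ') * |(-z) ^ (α - (j:ℝ)) * (G j z - G j 0)|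
        = (-z) ^ (-δ') * |G j z - G j 0| := by
          rw [abs_mul, abs_of_nonneg (Real.rpow_nonneg hz0.le _), ← mul_assoc,
            ← Real.rpow_add hz0, show (j:ℝ) - α - δ' + (α - (j:ℝ)) = -δ' from by ring]
      _ ≤ (-z) ^ (-δ') * (K * (-z) ^ δ) :=
          mul_le_mul_of_nonneg_left h2 (Real.rpow_nonneg hz0.le _)
      _ ≤ (-z) ^ (-δ') * (|K| * (-z) ^ δ) := by
          apply mul_le_mul_of_nonneg_left _ (Real.rpow_nonneg hz0.le _)
          exact mul_le_mul_of_nonneg_right (le_abs_self K) (Real.rpow_nonneg hz0.le _)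
      _ = |K| * (-z) ^ (δ - δ') := by
          rw [mul_comm ((-z) ^ (-δ')), mul_assoc, ← Real.rpow_add hz0,
            show δ + -δ' = δ - δ' from by ring]
      _ ≤ |K| * 1 :=
          mul_le_mul_of_nonneg_left (Real.rpow_le_one hz0.le hz1 (by linarith)) (abs_nonneg K)
      _ = |K| := mul_one _
  refine ⟨c₀, ⟨?_, ?_, ?_, ?_⟩, ?_⟩
  · exact hfN.sub (contDiffOn_const.mul ((contDiffOn_neg_rpow α N).mono (fun z hz => hz.2)))
  · exact hf1.sub ((contDiff_const.mul (contDiff_one_neg_rpow hα1)).contDiffOn)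
  · intro j hj2 hjN
    obtain ⟨K, hK⟩ := (hG j hj2 hjN).2
    exact ⟨|K|, hbound j hj2 hjN K hK⟩
  · -- quantitative bounds
    intro M hMf _ hMd _ hMG hMGH
    have hM0 : 0 ≤ M := (abs_nonneg _).trans (hMf (-1) ⟨le_refl _, by norm_num⟩)
    have hG20 : |G 2 0| ≤ M := hMG 2 le_rfl hN 0 ⟨by norm_num, le_rfl⟩
    have hc0b : |c₀| ≤ M / (α*(α-1)) := by
      rw [hc₀, abs_div, abs_of_pos hαα]
      gcongr
    have hc0C : |c₀| ≤ C * M := by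
      calc |c₀| ≤ M / (α*(α-1)) := hc0b
        _ = M * (1/(α*(α-1))) := by ring
        _ ≤ M * C := by
            apply mul_le_mul_of_nonneg_left _ hM0
            rw [hC]; linarith
        _ = C * M := mul_comm _ _
    refine ⟨hc0C, ?_, ?_, ?_⟩
    · intro z hz
      have hz0 : (0:ℝ) ≤ -z := by linarith [hz.2]
      have hz1 : -z ≤ 1 := by linarith [hz.1]
      have hp1 : (-z) ^ α ≤ 1 := Real.rpow_le_one hz0 hz1 hα0.le
      have hp0 : (0:ℝ) ≤ (-z) ^ α := Real.rpow_nonneg hz0 _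
      calc |f z - c₀ * (-z) ^ α| ≤ |f z| + |c₀ * (-z) ^ α| := abs_sub _ _
        _ = |f z| + |c₀| * (-z) ^ α := by rw [abs_mul, abs_of_nonneg hp0]
        _ ≤ M + |c₀| * 1 := by
            apply add_le_add (hMf z hz)
            exact mul_le_mul_of_nonneg_left hp1 (abs_nonneg _)
        _ ≤ M + M / (α*(α-1)) := by rw [mul_one]; linarith [hc0b]
        _ = M * (1 + 1/(α*(α-1))) := by ring
        _ ≤ M * C := by
            apply mul_le_mul_of_nonneg_left _ hM0
            rw [hC]; linarith
        _ = C * M := mul_comm _ _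
    · intro z hz
      have hz0 : (0:ℝ) ≤ -z := by linarith [hz.2]
      have hz1 : -z ≤ 1 := by linarith [hz.1]
      have hdd : derivWithin (fun w => f w - c₀ * (-w) ^ α) (Icc (-1:ℝ) 0) z
          = derivWithin f (Icc (-1:ℝ) 0) z - c₀ * -(α * (-z) ^ (α - 1)) := by
        have hdf : HasDerivWithinAt f (derivWithin f (Icc (-1:ℝ) 0) z) (Icc (-1:ℝ) 0) z :=
          ((hf1.differentiableOn (by norm_num)) z hz).hasDerivWithinAt
        have hdg := ((hasDerivAt_neg_rpow z (Or.inr hα1.le)).const_mul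
          c₀).hasDerivWithinAt (s := Icc (-1:ℝ) 0)
        exact (hdf.sub hdg).derivWithin (huI z hz)
      rw [hdd]
      have hp1 : (-z) ^ (α-1) ≤ 1 := Real.rpow_le_one hz0 hz1 (by linarith)
      have hp0 : (0:ℝ) ≤ (-z) ^ (α-1) := Real.rpow_nonneg hz0 _
      have hstep : |c₀ * -(α * (-z) ^ (α - 1))| ≤ |c₀| * α := by
        rw [abs_mul, abs_neg, abs_mul, abs_of_pos hα0, abs_of_nonneg hp0]
        calc |c₀| * (α * (-z) ^ (α-1)) ≤ |c₀| * (α * 1) :=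
              mul_le_mul_of_nonneg_left
                (mul_le_mul_of_nonneg_left hp1 hα0.le) (abs_nonneg _)
          _ = |c₀| * α := by ring
      have hc0a : |c₀| * α ≤ M / (α - 1) := by
        have h1 : |c₀| * α ≤ (M / (α*(α-1))) * α :=
          mul_le_mul_of_nonneg_right hc0b hα0.le
        calc |c₀| * α ≤ (M / (α*(α-1))) * α := h1
          _ = M / (α - 1) := by field_simp
      calc |derivWithin f (Icc (-1:ℝ) 0) z - c₀ * -(α * (-z) ^ (α - 1))|
          ≤ |derivWithin f (Icc (-1:ℝ) 0) z| + |c₀ * -(α * (-z) ^ (α - 1))| := abs_sub _ _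
        _ ≤ M + M / (α - 1) := add_le_add (hMd z hz) (hstep.trans hc0a)
        _ = M * (1 + 1/(α - 1)) := by ring
        _ ≤ M * C := by
            apply mul_le_mul_of_nonneg_left _ hM0
            rw [hC]; linarith
        _ = C * M := mul_comm _ _
    · intro j hj2 hjN z hz
      have h1 := hbound j hj2 hjN M (hMGH j hj2 hjN) z hz
      calc (-z) ^ ((j:ℝ) - α - δ') *
            |iteratedDerivWithin j (fun w => f w - c₀ * (-w) ^ α) (Ico (-1:ℝ) 0) z|
          ≤ |M| := h1
        _ = M := abs_of_nonneg hM0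
        _ ≤ C * M := by nlinarith [mul_nonneg (show (0:ℝ) ≤ C - 1 by rw [hC]; linarith) hM0]
  · -- uniqueness
    intro y hy
    obtain ⟨-, -, hy3, -⟩ := hy
    obtain ⟨M', hM'⟩ := hy3 2 le_rfl hN
    have hkey : ∀ z ∈ Ico (-1:ℝ) 0, |G 2 z - y * (α*(α-1))| ≤ M' * (-z) ^ δ' := by
      intro z hz
      have hz0 : (0:ℝ) < -z := neg_pos.mpr hz.2
      have hiter := iterDeriv_sub_rpow (α := α) hN hfN y z hz
      have hfj := invert_G z hz0 ((hG 2 le_rfl hN).1 z hz)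
      have he : iteratedDerivWithin 2 (fun w => f w - y * (-w) ^ α) (Ico (-1:ℝ) 0) z
          = (-z) ^ (α - ((2:ℕ):ℝ)) * (G 2 z - y * (α*(α-1))) := by
        rw [hiter, hfj, ccoef_two]; ring
      have hb := hM' z hz
      rw [he] at hb
      have hb2 : (-z) ^ (-δ') * |G 2 z - y * (α*(α-1))| ≤ M' := by
        calc (-z) ^ (-δ') * |G 2 z - y * (α*(α-1))|
            = (-z) ^ (((2:ℕ):ℝ) - α - δ') * |(-z) ^ (α - ((2:ℕ):ℝ)) * (G 2 z - y * (α*(α-1)))| := by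
              rw [abs_mul, abs_of_nonneg (Real.rpow_nonneg hz0.le _),
                ← mul_assoc ((-z) ^ (((2:ℕ):ℝ) - α - δ')) ((-z) ^ (α - ((2:ℕ):ℝ))),
                ← Real.rpow_add hz0,
                show ((2:ℕ):ℝ) - α - δ' + (α - ((2:ℕ):ℝ)) = -δ' from by ring]
          _ ≤ M' := hb
      calc |G 2 z - y * (α*(α-1))|
          = (-z) ^ δ' * ((-z) ^ (-δ') * |G 2 z - y * (α*(α-1))|) := by
            rw [← mul_assoc ((-z) ^ δ') ((-z) ^ (-δ')), ← Real.rpow_add hz0,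
              show δ' + -δ' = 0 from by ring, Real.rpow_zero, one_mul]
        _ ≤ (-z) ^ δ' * M' := mul_le_mul_of_nonneg_left hb2 (Real.rpow_nonneg hz0.le _)
        _ = M' * (-z) ^ δ' := mul_comm _ _
    have hmem : Ioo (-1:ℝ) 0 ∈ nhdsWithin (0:ℝ) (Iio 0) :=
      Ioo_mem_nhdsLT_of_mem ⟨by norm_num, le_rfl⟩
    obtain ⟨K₂, hK₂⟩ := (hG 2 le_rfl hN).2
    have T1 := holder_tendsto hδpos hK₂
    have T2 : Filter.Tendsto (G 2) (nhdsWithin (0:ℝ) (Iio 0)) (nhds (y * (α*(α-1)))) := by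
      have h0 : Filter.Tendsto (fun z => G 2 z - y * (α*(α-1))) (nhdsWithin (0:ℝ) (Iio 0))
          (nhds 0) := by
        apply squeeze_zero_norm' _ (show Filter.Tendsto (fun z : ℝ => M' * (-z) ^ δ') (nhdsWithin 0 (Iio 0)) (nhds 0) by simpa using (tendsto_neg_rpow hδ'pos).const_mul M')
        filter_upwards [hmem] with z hz
        exact hkey z ⟨hz.1.le, hz.2⟩
      have h4 := h0.add (tendsto_const_nhds (α := ℝ) (x := y * (α*(α-1)))
        (f := nhdsWithin 0 (Iio 0)))
      simpa using h4
    have huniq : G 2 0 = y * (α*(α-1)) := tendsto_nhds_unique T1 T2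
    rw [hc₀, huniq]
    field_simp
end
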